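/- arXiv:1805.07055 — 6 statements merged into one kernel-verified Lean document; each statement's English description precedes it below -/
import Mathlib

section
/- Let (X, ‖·‖ₙ) be a Fréchet space with metric ρ(x,y) = supₙ 2⁻ⁿ·‖x−y‖ₙ/(1+‖x−y‖ₙ), and let s ∈ ℝ₊^∞ have nonempty support. Define Xₛ = ⋃_{t≥0} t·Πₛ(X) and for x ∈ Xₛ set ‖x‖ₛ = sup{‖x‖ₙ/sₙ : n with sₙ > 0}. Then ‖·‖ₛ is a norm on Xₛ whose closed unit ball is Πₛ(X), and (Xₛ, ‖·‖ₛ) is a Banach space. -/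
open Filter Topology Set Pointwise

/-- The standard Fréchet metric built from a countable family of seminorms. -/
noncomputable def frechetRho {X : Type*} [AddCommGroup X] [Module ℝ X]
    (p : ℕ → Seminorm ℝ X) (x y : X) : ℝ :=
  ⨆ n, (2 : ℝ)⁻¹ ^ n * p n (x - y) / (1 + p n (x - y))

/-- The norm `‖x‖ₛ = sup { ‖x‖ₙ / sₙ : n ∈ supp s }` on `Xₛ`. -/
noncomputable def normS {X : Type*} [AddCommGroup X] [Module ℝ X]
    (p : ℕ → Seminorm ℝ X) (s : ℕ → ℝ) (x : X) : ℝ :=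
  ⨆ n : {m : ℕ // 0 < s m}, p n.1 x / s n.1

section Aux

variable {X : Type*} [AddCommGroup X] [Module ℝ X]

lemma normS_nonneg (p : ℕ → Seminorm ℝ X) (s : ℕ → ℝ) (x : X) : 0 ≤ normS p s x :=
  Real.iSup_nonneg fun n => div_nonneg (apply_nonneg _ _) n.2.le

lemma bddS (p : ℕ → Seminorm ℝ X) (s : ℕ → ℝ) {x : X} {t : ℝ}
    (ht : ∀ n, p n x ≤ t * s n) :
    BddAbove (Set.range fun n : {m : ℕ // 0 < s m} => p n.1 x / s n.1) := by
  refine ⟨t, ?_⟩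
  rintro _ ⟨n, rfl⟩
  exact (div_le_iff₀ n.2).2 (ht n.1)

lemma normS_le (p : ℕ → Seminorm ℝ X) (s : ℕ → ℝ) (hsupp : ∃ n, 0 < s n) {x : X} {t : ℝ}
    (ht : ∀ n, p n x ≤ t * s n) : normS p s x ≤ t := by
  have : Nonempty {m : ℕ // 0 < s m} := ⟨⟨hsupp.choose, hsupp.choose_spec⟩⟩
  exact ciSup_le fun n => (div_le_iff₀ n.2).2 (ht n.1)

lemma le_normS (p : ℕ → Seminorm ℝ X) (s : ℕ → ℝ) {x : X} {t : ℝ}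
    (ht : ∀ n, p n x ≤ t * s n) {n : ℕ} (hn : 0 < s n) :
    p n x / s n ≤ normS p s x :=
  le_ciSup (bddS p s ht) ⟨n, hn⟩

lemma keyS (p : ℕ → Seminorm ℝ X) (s : ℕ → ℝ) (hs : ∀ n, 0 ≤ s n) {x : X} {t : ℝ}
    (ht : ∀ n, p n x ≤ t * s n) (n : ℕ) : p n x ≤ normS p s x * s n := by
  by_cases hn : 0 < s n
  · exact (div_le_iff₀ hn).1 (le_normS p s ht hn)
  · have h0 : s n = 0 := le_antisymm (not_lt.1 hn) (hs n)
    have : p n x ≤ 0 := by simpa [h0] using ht n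
    simp [h0, le_antisymm this (apply_nonneg _ _)]

lemma normS_zero (p : ℕ → Seminorm ℝ X) (s : ℕ → ℝ) : normS p s (0 : X) = 0 := by
  simp only [normS, map_zero, zero_div]
  exact Real.iSup_const_zero

end Aux

/-- For `s` with nonempty support, `Xₛ = ⋃_{t ≥ 0} t·Πₛ` with
`‖x‖ₛ = sup_{n ∈ supp s} ‖x‖ₙ/sₙ` is a normed space whose closed unit ball is `Πₛ`,
and `(Xₛ, ‖·‖ₛ)` is a Banach space (every `‖·‖ₛ`-Cauchy sequence in `Xₛ`
`‖·‖ₛ`-converges to a point of `Xₛ`). -/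
theorem stmt4 {X : Type*} [AddCommGroup X] [Module ℝ X] (p : ℕ → Seminorm ℝ X)
    (hsep : ∀ x : X, (∀ n, p n x = 0) → x = 0)
    (hcomplete : ∀ u : ℕ → X,
      (∀ ε > (0 : ℝ), ∃ N, ∀ m ≥ N, ∀ k ≥ N, frechetRho p (u m) (u k) < ε) →
      ∃ x : X, Tendsto (fun k => frechetRho p (u k) x) atTop (𝓝 0))
    (s : ℕ → ℝ) (hs : ∀ n, 0 ≤ s n) (hsupp : ∃ n, 0 < s n)
    (Xs : Set X) (hXs : Xs = {x : X | ∃ t : ℝ, 0 ≤ t ∧ ∀ n, p n x ≤ t * s n}) :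
    (∀ x ∈ Xs, (normS p s x = 0 ↔ x = 0)) ∧
    (∀ x ∈ Xs, ∀ y ∈ Xs, normS p s (x + y) ≤ normS p s x + normS p s y) ∧
    (∀ (a : ℝ), ∀ x ∈ Xs, normS p s (a • x) = |a| * normS p s x) ∧
    ({x ∈ Xs | normS p s x ≤ 1} = {x : X | ∀ n, p n x ≤ s n}) ∧
    (∀ u : ℕ → X, (∀ k, u k ∈ Xs) →
      (∀ ε > (0 : ℝ), ∃ N, ∀ m ≥ N, ∀ k ≥ N, normS p s (u m - u k) < ε) →
      ∃ x ∈ Xs, Tendsto (fun k => normS p s (u k - x)) atTop (𝓝 0)) := by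
  subst hXs
  have hne : Nonempty {m : ℕ // 0 < s m} := ⟨⟨hsupp.choose, hsupp.choose_spec⟩⟩
  have key : ∀ x : X, (∃ t : ℝ, 0 ≤ t ∧ ∀ n, p n x ≤ t * s n) →
      ∀ n, p n x ≤ normS p s x * s n := by
    rintro x ⟨t, -, ht⟩ n
    exact keyS p s hs ht n
  have sub_mem : ∀ x, (∃ t : ℝ, 0 ≤ t ∧ ∀ n, p n x ≤ t * s n) →
      ∀ y, (∃ t : ℝ, 0 ≤ t ∧ ∀ n, p n y ≤ t * s n) →
      (∃ t : ℝ, 0 ≤ t ∧ ∀ n, p n (x - y) ≤ t * s n) := by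
    rintro x ⟨t1, ht1, h1⟩ y ⟨t2, ht2, h2⟩
    exact ⟨t1 + t2, by positivity, fun n => le_trans (map_sub_le_add (p n) x y)
      (by have := add_le_add (h1 n) (h2 n); linarith)⟩
  refine ⟨?_, ?_, ?_, ?_, ?_⟩
  · -- definiteness
    rintro x hx
    constructor
    · intro h0
      refine hsep x fun n => le_antisymm ?_ (apply_nonneg _ _)
      have := key x hx n
      rw [h0, zero_mul] at this
      exact this
    · rintro rfl
      exact normS_zero p s
  · -- triangle inequality
    rintro x hx y hy
    refine ciSup_le fun n => ?_
    rw [div_le_iff₀ n.2]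
    calc p n.1 (x + y) ≤ p n.1 x + p n.1 y := map_add_le_add _ _ _
      _ ≤ normS p s x * s n.1 + normS p s y * s n.1 :=
          add_le_add (key x hx n.1) (key y hy n.1)
      _ = (normS p s x + normS p s y) * s n.1 := (add_mul _ _ _).symm
  · -- homogeneity
    have hsmul_le : ∀ (a : ℝ) (x : X), (∃ t : ℝ, 0 ≤ t ∧ ∀ n, p n x ≤ t * s n) →
        normS p s (a • x) ≤ |a| * normS p s x := by
      intro a x hx
      refine normS_le p s hsupp fun n => ?_
      rw [map_smul_eq_mul, Real.norm_eq_abs, mul_assoc]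
      exact mul_le_mul_of_nonneg_left (key x hx n) (abs_nonneg a)
    intro a x hx
    rcases eq_or_ne a 0 with rfl | ha
    · simp [normS_zero p s]
    · have hax : (∃ t : ℝ, 0 ≤ t ∧ ∀ n, p n (a • x) ≤ t * s n) := by
        obtain ⟨t, ht0, ht⟩ := hx
        refine ⟨|a| * t, by positivity, fun n => ?_⟩
        rw [map_smul_eq_mul, Real.norm_eq_abs, mul_assoc]
        exact mul_le_mul_of_nonneg_left (ht n) (abs_nonneg a)
      refine le_antisymm (hsmul_le a x hx) ?_
      have h2 := hsmul_le a⁻¹ (a • x) hax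
      rw [inv_smul_smul₀ ha, abs_inv] at h2
      calc |a| * normS p s x ≤ |a| * (|a|⁻¹ * normS p s (a • x)) :=
            mul_le_mul_of_nonneg_left h2 (abs_nonneg a)
        _ = normS p s (a • x) := by
            rw [← mul_assoc, mul_inv_cancel₀ (abs_ne_zero.2 ha), one_mul]
  · -- unit ball
    ext x
    simp only [Set.mem_setOf_eq, Set.mem_sep_iff]
    constructor
    · rintro ⟨hx, h1⟩ n
      calc p n x ≤ normS p s x * s n := key x hx n
        _ ≤ 1 * s n := mul_le_mul_of_nonneg_right h1 (hs n)
        _ = s n := one_mul _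
    · intro h
      refine ⟨⟨1, zero_le_one, fun n => by rw [one_mul]; exact h n⟩,
        normS_le p s hsupp fun n => by rw [one_mul]; exact h n⟩
  · -- completeness
    intro u hu hc
    have dmem : ∀ m k, ∃ t : ℝ, 0 ≤ t ∧ ∀ n, p n (u m - u k) ≤ t * s n :=
      fun m k => sub_mem _ (hu m) _ (hu k)
    have half_le_one : ∀ i : ℕ, (2:ℝ)⁻¹ ^ i ≤ 1 :=
      fun i => pow_le_one₀ (by norm_num) (by norm_num)
    -- ρ-Cauchy
    have hrho : ∀ ε > (0:ℝ), ∃ N, ∀ m ≥ N, ∀ k ≥ N, frechetRho p (u m) (u k) < ε := by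
      intro ε hε
      obtain ⟨N₀, hN₀⟩ := exists_pow_lt_of_lt_one (half_pos hε) (by norm_num : (2:ℝ)⁻¹ < 1)
      set M : ℝ := (∑ n ∈ Finset.range (N₀+1), s n) + 1 with hMdef
      have hsum0 : 0 ≤ ∑ n ∈ Finset.range (N₀+1), s n := Finset.sum_nonneg fun n _ => hs n
      have hM0 : 0 < M := by rw [hMdef]; linarith
      have hsM : ∀ n ≤ N₀, s n ≤ M := by
        intro n hn
        have : s n ≤ ∑ i ∈ Finset.range (N₀+1), s i :=
          Finset.single_le_sum (fun i _ => hs i) (Finset.mem_range.2 (Nat.lt_succ_of_le hn))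
        rw [hMdef]; linarith
      obtain ⟨N, hN⟩ := hc (ε/2/M) (by positivity)
      refine ⟨N, fun m hm k hk => ?_⟩
      have hsub := hN m hm k hk
      refine lt_of_le_of_lt (ciSup_le fun n => ?_) (half_lt_self hε)
      set q := p n (u m - u k) with hq
      have hq0 : 0 ≤ q := apply_nonneg _ _
      have h1q : (0:ℝ) < 1 + q := by linarith
      have ha0 : (0:ℝ) ≤ (2:ℝ)⁻¹ ^ n := by positivity
      rcases le_or_gt n N₀ with hn | hn
      · -- small n : term ≤ q ≤ ε/2
        have hqle : q ≤ ε/2 := by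
          have h1 : q ≤ normS p s (u m - u k) * s n := key _ (dmem m k) n
          have h2 : normS p s (u m - u k) * s n ≤ (ε/2/M) * M :=
            mul_le_mul hsub.le (hsM n hn) (hs n) (by positivity)
          rw [div_mul_cancel₀ _ (ne_of_gt hM0)] at h2
          linarith
        have : (2:ℝ)⁻¹ ^ n * q / (1 + q) ≤ q := by
          rw [div_le_iff₀ h1q]
          nlinarith [half_le_one n]
        linarith
      · -- large n : term ≤ (1/2)^n ≤ (1/2)^N₀ < ε/2
        have h1 : (2:ℝ)⁻¹ ^ n * q / (1 + q) ≤ (2:ℝ)⁻¹ ^ n := by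
          rw [div_le_iff₀ h1q]
          nlinarith
        have h2 : (2:ℝ)⁻¹ ^ n ≤ (2:ℝ)⁻¹ ^ N₀ :=
          pow_le_pow_of_le_one (by norm_num) (by norm_num) hn.le
        linarith
    obtain ⟨x, hx⟩ := hcomplete u hrho
    -- seminorm-wise convergence
    have hpn : ∀ n : ℕ, ∀ ε > (0:ℝ), ∃ K, ∀ k ≥ K, p n (u k - x) < ε := by
      intro n ε hε
      have hc' : (0:ℝ) < (2:ℝ)⁻¹ ^ n * (ε / (1 + ε)) := by positivity
      obtain ⟨K, hK⟩ := (Metric.tendsto_atTop.1 hx) _ hc'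
      refine ⟨K, fun k hk => ?_⟩
      have h1 := hK k hk
      rw [Real.dist_eq, sub_zero] at h1
      set q := p n (u k - x) with hq
      have hq0 : 0 ≤ q := apply_nonneg _ _
      have h1q : (0:ℝ) < 1 + q := by linarith
      have hterm : (2:ℝ)⁻¹ ^ n * q / (1 + q) ≤ frechetRho p (u k) x := by
        have hrfl : frechetRho p (u k) x =
            ⨆ i : ℕ, (2:ℝ)⁻¹ ^ i * p i (u k - x) / (1 + p i (u k - x)) := rfl
        rw [hrfl, hq]
        refine le_ciSup (f := fun i : ℕ =>
          (2:ℝ)⁻¹ ^ i * p i (u k - x) / (1 + p i (u k - x))) ⟨1, ?_⟩ n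
        rintro _ ⟨i, rfl⟩
        have hqi0 : (0:ℝ) ≤ p i (u k - x) := apply_nonneg _ _
        rw [div_le_iff₀ (by linarith : (0:ℝ) < 1 + p i (u k - x))]
        nlinarith [half_le_one i]
      have hlt : (2:ℝ)⁻¹ ^ n * q / (1 + q) < (2:ℝ)⁻¹ ^ n * (ε / (1 + ε)) :=
        lt_of_le_of_lt (hterm.trans (le_abs_self _)) h1
      by_contra hcq
      push_neg at hcq
      have hge : (2:ℝ)⁻¹ ^ n * (ε / (1 + ε)) ≤ (2:ℝ)⁻¹ ^ n * q / (1 + q) := by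
        rw [mul_div_assoc]
        refine mul_le_mul_of_nonneg_left ?_ (by positivity)
        rw [div_le_div_iff₀ (by linarith) h1q]
        nlinarith
      linarith
    -- uniform estimate on the tail
    have hE : ∀ ε > (0:ℝ), ∃ N, ∀ m ≥ N, ∀ n, p n (u m - x) ≤ ε * s n := by
      intro ε hε
      obtain ⟨N, hN⟩ := hc ε hε
      refine ⟨N, fun m hm n => ?_⟩
      refine le_of_forall_pos_le_add fun δ hδ => ?_
      obtain ⟨K, hK⟩ := hpn n δ hδ
      set k := max N K with hkdef
      have h1 : p n (u m - x) ≤ p n (u m - u k) + p n (u k - x) := by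
        have heq : u m - x = (u m - u k) + (u k - x) := by abel
        rw [heq]; exact map_add_le_add _ _ _
      have h2 : p n (u m - u k) ≤ ε * s n :=
        calc p n (u m - u k) ≤ normS p s (u m - u k) * s n := key _ (dmem m k) n
          _ ≤ ε * s n := mul_le_mul_of_nonneg_right
              (hN m hm k (le_max_left _ _)).le (hs n)
      have h4 := hK k (le_max_right _ _)
      linarith
    -- x ∈ Xs
    obtain ⟨N1, hN1⟩ := hE 1 one_pos
    have hmx : ∃ t : ℝ, 0 ≤ t ∧ ∀ n, p n (u N1 - x) ≤ t * s n :=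
      ⟨1, zero_le_one, hN1 N1 le_rfl⟩
    have hxmem : ∃ t : ℝ, 0 ≤ t ∧ ∀ n, p n x ≤ t * s n := by
      have := sub_mem _ (hu N1) _ hmx
      rw [sub_sub_cancel] at this
      exact this
    refine ⟨x, hxmem, ?_⟩
    rw [Metric.tendsto_atTop]
    intro ε hε
    obtain ⟨N, hN⟩ := hE (ε/2) (half_pos hε)
    refine ⟨N, fun k hk => ?_⟩
    rw [Real.dist_eq, sub_zero, abs_of_nonneg (normS_nonneg p s _)]
    have : normS p s (u k - x) ≤ ε/2 := normS_le p s hsupp (hN k hk)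
    linarith
end

section
/- Let (X, ρ) be a locally convex topological vector space whose topology is induced by a translation-invariant metric ρ. Then for every fixed nonzero x̄ ∈ X there is an equivalent translation-invariant metric ρ̄ on X satisfying ρ̄(0, t·x̄) = |t| for all real t. -/
/-!
Write `N v = ρ 0 v`, an additive group norm with `ρ x y = N (y - x)`. Since `X` is a locally
convex Hausdorff space, Hahn–Banach gives a continuous functional `p` with `p x̄ = 1`, and
`N̄ v = |p v| + N (v - p v • x̄)` is again a group norm, equal to `|t|` on `t • x̄`. Continuity of
`p` and of `t ↦ t • x̄` makes `N` and `N̄` small at the same time, so their balls give the same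
topology.
-/

open Filter Topology Set

section

variable {X : Type*} [AddCommGroup X]

def GeneratesTopology [TopologicalSpace X] (N : X → ℝ) : Prop :=
  ∀ U : Set X, IsOpen U ↔ ∀ x ∈ U, ∃ ε > (0 : ℝ), ∀ y, N (y - x) < ε → y ∈ U

theorem generatesTopology_of_nhds_hasBasis [TopologicalSpace X] {N : X → ℝ}
    (h : ∀ x, (𝓝 x).HasBasis (fun ε : ℝ => 0 < ε) fun ε => {y | N (y - x) < ε}) :
    GeneratesTopology N := fun U => by
  simp only [isOpen_iff_mem_nhds, (h _).mem_iff, subset_def, mem_ofPred_eq]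

namespace GeneratesTopology

variable [TopologicalSpace X] {F : Type*} [FunLike F X ℝ] {N : F}

section Seminorm

variable [AddGroupSeminormClass F X ℝ]

theorem isOpen_ball (hN : GeneratesTopology N) (x : X) (c : ℝ) :
    IsOpen {y | N (y - x) < c} := by
  refine (hN _).2 fun y hy => ⟨c - N (y - x), sub_pos.2 hy, fun z hz => ?_⟩
  calc N (z - x) = N ((z - y) + (y - x)) := by rw [sub_add_sub_cancel]
    _ ≤ N (z - y) + N (y - x) := map_add_le_add N _ _
    _ < c := by linarith

theorem nhds_hasBasis (hN : GeneratesTopology N) (x : X) :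
    (𝓝 x).HasBasis (fun ε : ℝ => 0 < ε) fun ε => {y | N (y - x) < ε} := by
  refine ⟨fun U => ⟨fun hU => ?_, fun ⟨ε, hε, hsub⟩ => ?_⟩⟩
  · obtain ⟨V, hVU, hV, hxV⟩ := mem_nhds_iff.1 hU
    obtain ⟨ε, hε, hball⟩ := (hN V).1 hV x hxV
    exact ⟨ε, hε, fun y hy => hVU (hball y hy)⟩
  · exact mem_of_superset ((hN.isOpen_ball x ε).mem_nhds (by simpa using hε)) hsub

theorem tendsto_nhds_zero_iff (hN : GeneratesTopology N) {f : X → ℝ} :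
    Tendsto f (𝓝 0) (𝓝 0) ↔ ∀ ε > 0, ∃ δ > 0, ∀ v, N v < δ → |f v| < ε := by
  simp [(hN.nhds_hasBasis 0).tendsto_iff Metric.nhds_basis_ball]

theorem tendsto_nhds_zero (hN : GeneratesTopology N) : Tendsto N (𝓝 0) (𝓝 0) :=
  hN.tendsto_nhds_zero_iff.2 fun ε hε =>
    ⟨ε, hε, fun v hv => by rwa [abs_of_nonneg (apply_nonneg N v)]⟩

theorem of_tendsto_of_forall_lt (hN : GeneratesTopology N) {G : Type*} [FunLike G X ℝ]
    [AddGroupSeminormClass G X ℝ] (M : G) (hM : Tendsto M (𝓝 0) (𝓝 0))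
    (hNM : ∀ ε > 0, ∃ δ > 0, ∀ v, M v < δ → N v < ε) :
    GeneratesTopology M := by
  have hMN : ∀ ε > 0, ∃ δ > 0, ∀ v, N v < δ → M v < ε := fun ε hε => by
    obtain ⟨δ, hδ, h⟩ := hN.tendsto_nhds_zero_iff.1 hM ε hε
    exact ⟨δ, hδ, fun v hv => (le_abs_self _).trans_lt (h v hv)⟩
  exact generatesTopology_of_nhds_hasBasis fun x =>
    (hN.nhds_hasBasis x).to_hasBasis
      (fun ε hε => let ⟨δ, hδ, h⟩ := hNM ε hε; ⟨δ, hδ, fun y => h (y - x)⟩)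
      (fun ε hε => let ⟨δ, hδ, h⟩ := hMN ε hε; ⟨δ, hδ, fun y => h (y - x)⟩)

end Seminorm

theorem t1Space [AddGroupNormClass F X ℝ] (hN : GeneratesTopology N) : T1Space X := by
  refine ⟨fun y => isOpen_compl_iff.1 <| (hN _).2 fun x hx => ?_⟩
  refine ⟨N (y - x), map_pos_of_ne_zero N (sub_ne_zero.2 (Ne.symm hx)), fun z hz hzy => ?_⟩
  exact lt_irrefl _ (hzy ▸ hz)

end GeneratesTopology

namespace AddGroupNorm

def ofInvariantMetric (ρ : X → X → ℝ) (hsymm : ∀ x y, ρ x y = ρ y x)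
    (heq : ∀ x y, ρ x y = 0 ↔ x = y) (htri : ∀ x y z, ρ x z ≤ ρ x y + ρ y z)
    (hinv : ∀ x y z, ρ (x + z) (y + z) = ρ x y) : AddGroupNorm X where
  toFun v := ρ 0 v
  map_zero' := (heq 0 0).2 rfl
  add_le' a b := by
    have h : ρ a (a + b) = ρ 0 b := by simpa [add_comm] using hinv 0 b a
    linarith [htri 0 a (a + b)]
  neg' v := by rw [← hinv 0 (-v) v, zero_add, neg_add_cancel, hsymm]
  eq_zero_of_map_eq_zero' v h := ((heq 0 v).1 h).symm

theorem ofInvariantMetric_sub {ρ : X → X → ℝ} (hsymm : ∀ x y, ρ x y = ρ y x)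
    (heq : ∀ x y, ρ x y = 0 ↔ x = y) (htri : ∀ x y z, ρ x z ≤ ρ x y + ρ y z)
    (hinv : ∀ x y z, ρ (x + z) (y + z) = ρ x y) (x y : X) :
    ofInvariantMetric ρ hsymm heq htri hinv (y - x) = ρ x y := by
  change ρ 0 (y - x) = ρ x y
  rw [← hinv x y (-x), add_neg_cancel, sub_eq_add_neg]

variable [Module ℝ X]

def straighten (N : AddGroupNorm X) (p : X →ₗ[ℝ] ℝ) (e : X) : AddGroupNorm X where
  toFun v := |p v| + N (v - p v • e)
  map_zero' := by simp
  add_le' a b := by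
    have hsplit : a + b - p (a + b) • e = (a - p a • e) + (b - p b • e) := by
      rw [map_add, add_smul]; abel
    rw [hsplit, map_add]
    linarith [abs_add_le (p a) (p b), map_add_le_add N (a - p a • e) (b - p b • e)]
  neg' v := by
    rw [map_neg, abs_neg, neg_smul, sub_neg_eq_add, ← map_neg_eq_map N, neg_add_eq_sub, neg_sub]
  eq_zero_of_map_eq_zero' v h := by
    obtain ⟨hp, hN⟩ := (add_eq_zero_iff_of_nonneg (abs_nonneg _) (apply_nonneg N _)).1 h
    simpa [abs_eq_zero.1 hp] using (map_eq_zero_iff_eq_zero N).1 hN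

variable {N : AddGroupNorm X} {p : X →ₗ[ℝ] ℝ} {e : X}

theorem straighten_apply (v : X) : N.straighten p e v = |p v| + N (v - p v • e) := rfl

theorem straighten_smul (he : p e = 1) (t : ℝ) : N.straighten p e (t • e) = |t| := by
  simp [straighten_apply, he]

theorem abs_le_straighten (v : X) : |p v| ≤ N.straighten p e v := by
  rw [straighten_apply]
  linarith [apply_nonneg N (v - p v • e)]

theorem le_straighten_add (v : X) : N v ≤ N.straighten p e v + N (p v • e) :=
  calc N v = N ((v - p v • e) + p v • e) := by rw [sub_add_cancel]
    _ ≤ N (v - p v • e) + N (p v • e) := map_add_le_add N _ _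
    _ ≤ N.straighten p e v + N (p v • e) := by rw [straighten_apply]; linarith [abs_nonneg (p v)]

theorem tendsto_straighten_nhds_zero [TopologicalSpace X] [IsTopologicalAddGroup X]
    [ContinuousSMul ℝ X] (hN : Tendsto N (𝓝 0) (𝓝 0)) (hp : Continuous (p : X → ℝ)) :
    Tendsto (N.straighten p e) (𝓝 0) (𝓝 0) := by
  have hproj : Tendsto (fun v => v - p v • e) (𝓝 0) (𝓝 0) :=
    (continuous_id.sub (hp.smul continuous_const)).tendsto' 0 0 (by simp)
  have habs : Tendsto (fun v => |p v|) (𝓝 0) (𝓝 0) :=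
    (continuous_abs.comp hp).tendsto' 0 0 (by simp)
  rw [← add_zero (0 : ℝ)]
  exact habs.add (hN.comp hproj)

end AddGroupNorm

open AddGroupNorm in
theorem GeneratesTopology.straighten [Module ℝ X] [TopologicalSpace X] [IsTopologicalAddGroup X]
    [ContinuousSMul ℝ X] {N : AddGroupNorm X} {p : X →ₗ[ℝ] ℝ} {e : X}
    (hN : GeneratesTopology N) (hp : Continuous (p : X → ℝ)) :
    GeneratesTopology (N.straighten p e) := by
  refine hN.of_tendsto_of_forall_lt _ (tendsto_straighten_nhds_zero hN.tendsto_nhds_zero hp)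
    fun ε hε => ?_
  obtain ⟨δ, hδ, hline⟩ : ∃ δ > 0, ∀ t : ℝ, |t| < δ → N (t • e) < ε / 2 := by
    have h : Tendsto (fun t : ℝ => N (t • e)) (𝓝 0) (𝓝 0) :=
      hN.tendsto_nhds_zero.comp ((continuous_id.smul continuous_const).tendsto' 0 0 (by simp))
    simpa [Real.dist_eq, abs_of_nonneg (apply_nonneg N _)] using
      Metric.tendsto_nhds_nhds.1 h (ε / 2) (half_pos hε)
  refine ⟨min δ (ε / 2), lt_min hδ (half_pos hε), fun v hv => ?_⟩
  have hpv : |p v| < δ := (abs_le_straighten v).trans_lt (hv.trans_le (min_le_left _ _))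
  linarith [le_straighten_add (N := N) (p := p) (e := e) v, hline _ hpv, min_le_right δ (ε / 2)]

end

/-- In a locally convex TVS whose topology is generated by a
translation-invariant metric `ρ`, for every `xb ≠ 0` there is an equivalent
translation-invariant metric `ρ'` with `ρ'(0, t·xb) = |t|` for all `t ∈ ℝ`. -/
theorem stmt5 {X : Type*} [AddCommGroup X] [Module ℝ X] [TopologicalSpace X]
    [IsTopologicalAddGroup X] [ContinuousSMul ℝ X] [LocallyConvexSpace ℝ X]
    (ρ : X → X → ℝ)
    (hsymm : ∀ x y, ρ x y = ρ y x)
    (heq : ∀ x y, ρ x y = 0 ↔ x = y)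
    (htri : ∀ x y z, ρ x z ≤ ρ x y + ρ y z)
    (hinv : ∀ x y z, ρ (x + z) (y + z) = ρ x y)
    (hgen : ∀ U : Set X, IsOpen U ↔ ∀ x ∈ U, ∃ ε > (0 : ℝ), ∀ y, ρ x y < ε → y ∈ U)
    (xb : X) (hxb : xb ≠ 0) :
    ∃ ρ' : X → X → ℝ,
      (∀ x y, ρ' x y = ρ' y x) ∧
      (∀ x y, ρ' x y = 0 ↔ x = y) ∧
      (∀ x y z, ρ' x z ≤ ρ' x y + ρ' y z) ∧
      (∀ x y z, ρ' (x + z) (y + z) = ρ' x y) ∧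
      (∀ U : Set X, IsOpen U ↔ ∀ x ∈ U, ∃ ε > (0 : ℝ), ∀ y, ρ' x y < ε → y ∈ U) ∧
      (∀ t : ℝ, ρ' 0 (t • xb) = |t|) := by
  have hN : GeneratesTopology (AddGroupNorm.ofInvariantMetric ρ hsymm heq htri hinv) := by
    simpa only [GeneratesTopology, AddGroupNorm.ofInvariantMetric_sub] using hgen
  have := hN.t1Space
  obtain ⟨p, hp⟩ := SeparatingDual.exists_eq_one (R := ℝ) hxb
  set M := (AddGroupNorm.ofInvariantMetric ρ hsymm heq htri hinv).straighten p xb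
  refine ⟨fun x y => M (y - x), fun x y => map_sub_rev M y x, fun x y => ?_, fun x y z => ?_,
    fun x y z => by simp only [add_sub_add_right_eq_sub], hN.straighten p.cont,
    fun t => by simpa using AddGroupNorm.straighten_smul hp t⟩
  · rw [map_eq_zero_iff_eq_zero, sub_eq_zero, eq_comm]
  · calc M (z - x) = M ((z - y) + (y - x)) := by rw [sub_add_sub_cancel]
      _ ≤ M (y - x) + M (z - y) := by rw [add_comm (M _)]; exact map_add_le_add M _ _
end

section
/- Let (M₁, ρ₁) and (M₂, ρ₂) be complete metric spaces and F : M₁ ⇉ M₂ a set-valued map with closed graph. Let U ⊆ M₁ and V ⊆ M₂ be open with graph(F) ∩ (U × V) ≠ ∅. Suppose there is α > 0 such that for every (x,y) ∈ graph(F) ∩ (U × V) and every r < dist(x, M₁ \ U), the closure of F(B(x,r)) contains B(y, α·r) ∩ V. Then for every β ∈ (0, α), every such (x,y), and every r < dist(x, M₁ \ U), the set F(B(x,r)) itself (without closure) contains B(y, β·r) ∩ V. -/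
open Filter Topology Set Metric

/-- density lemma. If the closure of `F(B(x,r))` contains `B(y, αr) ∩ V`
for all `(x,y) ∈ graph F ∩ (U × V)` and all `r < dist(x, M₁ \ U)`, then for any
`β ∈ (0, α)` the set `F(B(x,r))` itself contains `B(y, βr) ∩ V`. -/
theorem stmt7 {M₁ M₂ : Type*} [MetricSpace M₁] [MetricSpace M₂]
    [CompleteSpace M₁] [CompleteSpace M₂]
    (F : M₁ → Set M₂)
    (hgraph : IsClosed {q : M₁ × M₂ | q.2 ∈ F q.1})
    (U : Set M₁) (V : Set M₂) (hU : IsOpen U) (hV : IsOpen V)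
    (hne : ∃ x y, y ∈ F x ∧ x ∈ U ∧ y ∈ V)
    (α : ℝ) (hα : 0 < α)
    (hdense : ∀ x y, y ∈ F x → x ∈ U → y ∈ V → ∀ r : ℝ, 0 < r →
      ENNReal.ofReal r < EMetric.infEdist x Uᶜ →
      closedBall y (α * r) ∩ V ⊆ closure (⋃ a ∈ closedBall x r, F a)) :
    ∀ β : ℝ, 0 < β → β < α → ∀ x y, y ∈ F x → x ∈ U → y ∈ V → ∀ r : ℝ, 0 < r →
      ENNReal.ofReal r < EMetric.infEdist x Uᶜ →
      closedBall y (β * r) ∩ V ⊆ ⋃ a ∈ closedBall x r, F a := by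
  intro β hβ hβα x y hyF hxU hyV r hr hrU z hz
  obtain ⟨hzball, hzV⟩ := hz
  set t : ℝ := β / α with ht_def
  have ht0 : 0 < t := div_pos hβ hα
  have ht1 : t < 1 := (div_lt_one hα).2 hβα
  set θ : ℝ := (1 - t) / 2 with hθ_def
  have hθ0 : 0 < θ := by simp only [hθ_def]; linarith
  have hθ1 : θ < 1 := by simp only [hθ_def]; linarith
  set rad : ℕ → ℝ := fun n => t * r * θ ^ n with hrad
  have hradpos : ∀ n, 0 < rad n := fun n => by
    simp only [hrad]; positivity
  set psum : ℕ → ℝ := fun n => ∑ k ∈ Finset.range n, rad k with hpsum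
  have hS : t * r / (1 - θ) < r := by
    rw [div_lt_iff₀ (by linarith)]
    have : 1 - θ = (1 + t) / 2 := by simp only [hθ_def]; ring
    rw [this]
    nlinarith
  have hsum : ∀ n, psum n + rad n < r := by
    intro n
    have h1 : psum n + rad n = psum (n + 1) := by
      simp only [hpsum, Finset.sum_range_succ]
    rw [h1]
    have h2 : psum (n + 1) ≤ t * r / (1 - θ) := by
      simp only [hpsum, hrad]
      rw [← Finset.mul_sum, div_eq_mul_inv]
      refine mul_le_mul_of_nonneg_left ?_ (by positivity)
      have := Summable.sum_le_tsum (Finset.range (n + 1))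
        (fun i _ => by positivity)
        (summable_geometric_of_lt_one hθ0.le hθ1)
      rwa [tsum_geometric_of_lt_one hθ0.le hθ1] at this
    linarith
  -- the invariant
  set Q : ℕ → M₁ × M₂ → Prop := fun n p =>
    p.2 ∈ F p.1 ∧ p.2 ∈ V ∧ dist p.2 z ≤ α * rad n ∧ dist p.1 x ≤ psum n with hQ
  obtain ⟨δ, hδ0, hδ⟩ := Metric.isOpen_iff.1 hV z hzV
  have key : ∀ n (p : M₁ × M₂), Q n p →
      ∃ p' : M₁ × M₂, Q (n + 1) p' ∧ dist p'.1 p.1 ≤ rad n := by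
    rintro n ⟨a, b⟩ ⟨hbF, hbV, hbz, hax⟩
    have hedist : ENNReal.ofReal (rad n) < EMetric.infEdist a Uᶜ := by
      have h1 : EMetric.infEdist x Uᶜ ≤ EMetric.infEdist a Uᶜ + edist x a :=
        EMetric.infEdist_le_infEdist_add_edist
      have h2 : ENNReal.ofReal (rad n) + edist x a < EMetric.infEdist x Uᶜ := by
        refine lt_of_le_of_lt ?_ hrU
        rw [edist_dist]
        calc ENNReal.ofReal (rad n) + ENNReal.ofReal (dist x a)
            = ENNReal.ofReal (rad n + dist x a) := by
              rw [ENNReal.ofReal_add (hradpos n).le dist_nonneg]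
          _ ≤ ENNReal.ofReal r := by
              apply ENNReal.ofReal_le_ofReal
              have := hsum n
              have hxa : dist x a ≤ psum n := by rwa [dist_comm]
              linarith
      have h3 : ENNReal.ofReal (rad n) + edist x a <
          EMetric.infEdist a Uᶜ + edist x a := lt_of_lt_of_le h2 h1
      exact (ENNReal.add_lt_add_iff_right (edist_ne_top x a)).1 h3
    have haU : a ∈ U := by
      by_contra h
      have : EMetric.infEdist a Uᶜ = 0 :=
        EMetric.infEdist_zero_of_mem h
      rw [this] at hedist
      exact (ENNReal.not_lt_zero hedist)
    have hzmem : z ∈ closedBall b (α * rad n) ∩ V :=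
      ⟨by rwa [mem_closedBall, dist_comm], hzV⟩
    have hcl := hdense a b hbF haU hbV (rad n) (hradpos n) hedist hzmem
    rw [Metric.mem_closure_iff] at hcl
    obtain ⟨w, hw, hwz⟩ := hcl (min δ (α * rad (n + 1)))
      (lt_min hδ0 (by have := hradpos (n + 1); positivity))
    simp only [mem_iUnion, exists_prop] at hw
    obtain ⟨a', ha', hwF⟩ := hw
    refine ⟨(a', w), ⟨hwF, ?_, ?_, ?_⟩, ha'⟩
    · apply hδ
      rw [mem_ball, dist_comm]
      exact lt_of_lt_of_le hwz (min_le_left _ _)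
    · rw [dist_comm]
      exact le_of_lt (lt_of_lt_of_le hwz (min_le_right _ _))
    · calc dist a' x ≤ dist a' a + dist a x := dist_triangle _ _ _
        _ ≤ rad n + psum n := add_le_add ha' hax
        _ = psum (n + 1) := by
            simp only [hpsum, Finset.sum_range_succ]; ring
  have hQ0 : Q 0 (x, y) := by
    refine ⟨hyF, hyV, ?_, ?_⟩
    · have : α * rad 0 = β * r := by
        simp only [hrad, pow_zero, mul_one, ht_def]
        field_simp
      rw [this, dist_comm]
      exact hzball
    · simp [hpsum]
  -- construct the sequence
  let f : ∀ n : ℕ, {p : M₁ × M₂ // Q n p} := fun n =>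
    Nat.rec ⟨(x, y), hQ0⟩
      (fun n ih => ⟨(key n ih.1 ih.2).choose, (key n ih.1 ih.2).choose_spec.1⟩) n
  have hstep : ∀ n, dist (f (n + 1)).1.1 (f n).1.1 ≤ rad n := fun n =>
    (key n (f n).1 (f n).2).choose_spec.2
  set xs : ℕ → M₁ := fun n => (f n).1.1 with hxs
  set ys : ℕ → M₂ := fun n => (f n).1.2 with hys
  have hcauchy : CauchySeq xs := by
    apply cauchySeq_of_le_geometric θ (t * r) hθ1
    intro n
    rw [dist_comm]
    exact hstep n
  obtain ⟨xlim, hxlim⟩ := cauchySeq_tendsto_of_complete hcauchy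
  have hxlimball : xlim ∈ closedBall x r := by
    have hle : dist (xs 0) xlim ≤ t * r / (1 - θ) :=
      dist_le_of_le_geometric_of_tendsto₀ θ (t * r) hθ1
        (fun n => by rw [dist_comm]; exact hstep n) hxlim
    have hx0 : xs 0 = x := rfl
    rw [hx0] at hle
    rw [mem_closedBall, dist_comm]
    exact hle.trans hS.le
  have hysz : Tendsto ys atTop (𝓝 z) := by
    rw [tendsto_iff_dist_tendsto_zero]
    have hb : ∀ n, dist (ys n) z ≤ α * t * r * θ ^ n := by
      intro n
      have := (f n).2.2.2.1
      simp only [hrad] at this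
      calc dist (ys n) z ≤ α * (t * r * θ ^ n) := this
        _ = α * t * r * θ ^ n := by ring
    have hlim : Tendsto (fun n => α * t * r * θ ^ n) atTop (𝓝 0) := by
      have := tendsto_pow_atTop_nhds_zero_of_lt_one hθ0.le hθ1
      have h2 := this.const_mul (α * t * r)
      simpa [mul_assoc] using h2
    exact squeeze_zero (fun n => dist_nonneg) hb hlim
  have htend : Tendsto (fun n => (xs n, ys n)) atTop (𝓝 (xlim, z)) :=
    hxlim.prodMk_nhds hysz
  have hzF : z ∈ F xlim := by
    have := hgraph.mem_of_tendsto htend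
      (Eventually.of_forall (fun n => (f n).2.1))
    exact this
  exact mem_iUnion₂.2 ⟨xlim, hxlimball, hzF⟩
end

section
/- Let (M, ρ) be a complete metric space and S : M ⇉ M a set-valued map satisfying: (i) x ∉ S(x) for all x, and (ii) whenever y ∈ S(x) and xₙ → x, then y ∈ S(xₙ) for infinitely many n. Let M′ ⊆ M be a set such that S(x) ≠ ∅ for all x ∈ M′. Then for every x₀ ∈ M, one of the following holds: (a) there is an infinite orbit x_{i+1} ∈ S(xᵢ) with ∑ᵢ ρ(xᵢ, x_{i+1}) = ∞; (b1) there is a finite orbit x₁,…,xₙ with x_{i+1} ∈ S(xᵢ) and xₙ ∉ M′; (b2) there is an infinite orbit x_{i+1} ∈ S(xᵢ) with ∑ᵢ ρ(xᵢ, x_{i+1}) < ∞ converging to a limit x̄ ∉ M′. -/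
open Filter Topology Set

/-- the Long Orbit or Empty Value (LOEV) principle. -/
theorem stmt8 {M : Type*} [MetricSpace M] [CompleteSpace M]
    (S : M → Set M)
    (hirr : ∀ x, x ∉ S x)
    (hstab : ∀ x y, y ∈ S x → ∀ u : ℕ → M, Tendsto u atTop (𝓝 x) →
      ∃ᶠ n in atTop, y ∈ S (u n))
    (M' : Set M) (hM' : ∀ x ∈ M', (S x).Nonempty)
    (x₀ : M) :
    -- (a) an infinite orbit of infinite length
    (∃ x : ℕ → M, x 0 = x₀ ∧ (∀ i, x (i + 1) ∈ S (x i)) ∧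
      ¬ Summable (fun i => dist (x i) (x (i + 1)))) ∨
    -- (b1) a finite orbit ending outside M'
    (∃ (n : ℕ) (x : ℕ → M), x 0 = x₀ ∧ (∀ i < n, x (i + 1) ∈ S (x i)) ∧ x n ∉ M') ∨
    -- (b2) an infinite orbit of finite length converging to a point outside M'
    (∃ x : ℕ → M, x 0 = x₀ ∧ (∀ i, x (i + 1) ∈ S (x i)) ∧
      Summable (fun i => dist (x i) (x (i + 1))) ∧
      ∃ xb : M, Tendsto x atTop (𝓝 xb) ∧ xb ∉ M') := by
  classical
  -- selection: a nearly-maximal step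
  have sel : ∀ x : M, (S x).Nonempty → ∃ x', x' ∈ S x ∧
      ((1:ℝ)/2 ≤ dist x x' ∨ ∀ z ∈ S x, dist x z ≤ 2 * dist x x') := by
    intro x hx
    by_cases hc : ∃ z ∈ S x, (1:ℝ)/2 ≤ dist x z
    · obtain ⟨z, hz, hdz⟩ := hc
      exact ⟨z, hz, Or.inl hdz⟩
    · push_neg at hc
      set A : Set ℝ := (dist x) '' (S x) with hA
      have hAne : A.Nonempty := hx.image _
      have hAbdd : BddAbove A := by
        refine ⟨1/2, ?_⟩
        rintro a ⟨z, hz, rfl⟩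
        exact (hc z hz).le
      obtain ⟨z₀, hz₀⟩ := hx
      have hz₀pos : 0 < dist x z₀ := by
        rw [dist_pos]
        intro h
        exact hirr x (h ▸ hz₀)
      have hspos : 0 < sSup A := lt_of_lt_of_le hz₀pos (le_csSup hAbdd ⟨z₀, hz₀, rfl⟩)
      have hlt : sSup A / 2 < sSup A := by linarith
      obtain ⟨a, ⟨x', hx', rfl⟩, ha⟩ := exists_lt_of_lt_csSup hAne hlt
      refine ⟨x', hx', Or.inr ?_⟩
      intro z hz
      have : dist x z ≤ sSup A := le_csSup hAbdd ⟨z, hz, rfl⟩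
      linarith
  choose! nxt hmem hsel using sel
  by_contra hcon
  push_neg at hcon
  obtain ⟨ha, hb, hc⟩ := hcon
  set f : ℕ → M := fun n => nxt^[n] x₀ with hf
  have hf0 : f 0 = x₀ := rfl
  have hfs : ∀ n, f (n + 1) = nxt (f n) := fun n => Function.iterate_succ_apply' nxt n x₀
  have key : ∀ n, ∀ i < n, f (i + 1) ∈ S (f i) := by
    intro n
    induction n with
    | zero => intro i h; omega
    | succ n ih =>
      intro i hi
      rcases Nat.lt_succ_iff_lt_or_eq.mp hi with h | h
      · exact ih i h
      · subst h
        have hmemM' : f i ∈ M' := hb i f hf0 ih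
        have hne := hM' _ hmemM'
        rw [hfs i]
        exact hmem _ hne
  have step : ∀ i, f (i + 1) ∈ S (f i) := fun i => key (i + 1) i (Nat.lt_succ_self i)
  have hs : Summable (fun i => dist (f i) (f (i + 1))) := ha f hf0 step
  have hcauchy : CauchySeq f := cauchySeq_of_summable_dist hs
  obtain ⟨xb, hxb⟩ := cauchySeq_tendsto_of_complete hcauchy
  have hxbM' : xb ∈ M' := hc f hf0 step hs xb hxb
  obtain ⟨y, hy⟩ := hM' _ hxbM'
  have hfreq := hstab xb y hy f hxb
  have hd0 : Tendsto (fun i => dist (f i) (f (i + 1))) atTop (𝓝 0) := hs.tendsto_atTop_zero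
  have hkey : ∀ ε : ℝ, 0 < ε → dist y xb < ε := by
    intro ε hε
    have hε4 : 0 < min (ε/4) (1/4) := by positivity
    have hev1 : ∀ᶠ n in atTop, dist (f n) (f (n+1)) < min (ε/4) (1/4) := by
      have := Metric.tendsto_atTop.mp hd0 _ hε4
      obtain ⟨N, hN⟩ := this
      filter_upwards [eventually_ge_atTop N] with n hn
      have := hN n hn
      rwa [Real.dist_eq, sub_zero, abs_of_nonneg dist_nonneg] at this
    have hev2 : ∀ᶠ n in atTop, dist (f n) xb < ε/2 := by
      have := Metric.tendsto_atTop.mp hxb (ε/2) (by positivity)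
      obtain ⟨N, hN⟩ := this
      filter_upwards [eventually_ge_atTop N] with n hn using hN n hn
    obtain ⟨n, hyn, h1, h2⟩ := (hfreq.and_eventually (hev1.and hev2)).exists
    have hmemM' : f n ∈ M' := hb n f hf0 (fun i hi => step i)
    have hne := hM' _ hmemM'
    have hd : dist (f n) (f (n+1)) < min (ε/4) (1/4) := h1
    rcases hsel (f n) hne with hcase | hcase
    · rw [← hfs n] at hcase
      have : dist (f n) (f (n+1)) < 1/4 := lt_of_lt_of_le hd (min_le_right _ _)
      linarith
    · rw [← hfs n] at hcase
      have hdy : dist (f n) y ≤ 2 * dist (f n) (f (n+1)) := hcase y hyn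
      have : dist (f n) (f (n+1)) < ε/4 := lt_of_lt_of_le hd (min_le_left _ _)
      calc dist y xb ≤ dist y (f n) + dist (f n) xb := dist_triangle _ _ _
        _ = dist (f n) y + dist (f n) xb := by rw [dist_comm]
        _ < 2 * (ε/4) + ε/2 := by linarith
        _ = ε := by ring
  have h0 : dist y xb ≤ 0 := by
    by_contra h
    push_neg at h
    exact absurd (hkey _ h) (lt_irrefl _)
  have : y = xb := by
    have := le_antisymm h0 dist_nonneg
    exact eq_of_dist_eq_zero this
  exact hirr xb (this ▸ hy)
end

section
/- Let (X, ‖·‖ₙ) and (Y, |·|ₙ) be Fréchet spaces and F : X ⇉ Y a set-valued map with closed graph. Let U ⊆ X, V ⊆ Y be open with graph(F) ∩ (U × V) ≠ ∅. Assume that for some s ∈ ℝ₊^∞ and some nonempty set C ⊆ Y, D′F(x,y)(Πₛ(X)) ⊇ C for all (x,y) ∈ (U × V) ∩ graph(F). Then for every (x,y) ∈ graph(F) with x + Πₛ(X) ⊆ U and [y, y + C] ⊆ V, the closure of F(x + Πₛ(X)) contains y + C. -/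
open Filter Topology Set Pointwise

/-- `Πₛ(X) = {x : ‖x‖ₙ ≤ sₙ for all n}`. -/
def PiS {X : Type*} [AddCommGroup X] [Module ℝ X] (p : ℕ → Seminorm ℝ X) (s : ℕ → ℝ) :
    Set X := {x | ∀ n, p n x ≤ s n}

/-- The contingent variation `D′F(x,y)(A)`: `v ∈ D′F(x,y)(A)` iff there are `tₖ ↓ 0`,
`aₖ ∈ A` and `zₖ ∈ F(x + tₖ aₖ)` with `ρ_Y(zₖ, y + tₖ v)/tₖ → 0`. -/
def contVar {X Y : Type*} [AddCommGroup X] [Module ℝ X] [AddCommGroup Y] [Module ℝ Y]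
    (q : ℕ → Seminorm ℝ Y) (F : X → Set Y) (x : X) (y : Y) (A : Set X) : Set Y :=
  {v | ∃ (t : ℕ → ℝ) (a : ℕ → X) (z : ℕ → Y),
    (∀ k, 0 < t k) ∧ Filter.Tendsto t Filter.atTop (nhds 0) ∧ (∀ k, a k ∈ A) ∧
    (∀ k, z k ∈ F (x + t k • a k)) ∧
    Filter.Tendsto (fun k => frechetRho q (z k) (y + t k • v) / t k) Filter.atTop (nhds 0)}

/-- The `ρ`-closure of a set. -/
def rhoClosure {Y : Type*} [AddCommGroup Y] [Module ℝ Y] (q : ℕ → Seminorm ℝ Y)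
    (A : Set Y) : Set Y := {y | ∀ ε > (0 : ℝ), ∃ a ∈ A, frechetRho q a y < ε}

/-- Openness with respect to the Fréchet metric `ρ`. -/
def RhoOpen {X : Type*} [AddCommGroup X] [Module ℝ X] (p : ℕ → Seminorm ℝ X)
    (U : Set X) : Prop := ∀ x ∈ U, ∃ ε > (0 : ℝ), ∀ x', frechetRho p x x' < ε → x' ∈ U

/-!
Fix `c ∈ C`, and a tolerance `η < ε` smaller than a uniform margin by which the segment
`[y, y + c]` lies inside `V`. Order triples `(t, u, z)` by `(t, u, z) ≤ (t', u', z')` iff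
`t ≤ t'`, `u' - u ∈ (t' - t) Πₛ(X)` and `ρ(z', z + (t' - t) c) ≤ η (t' - t)`, and call a triple
admissible if `t ≤ 1`, `z ∈ F (x + u)` and `(0, 0, y) ≤ (t, u, z)`. Along a chain the increments
of `u` and `z` are controlled by those of `t`, so a sequence whose `t` tends to the supremum is
Cauchy; completeness and the closed graph give an admissible upper bound, and Zorn's lemma a
maximal admissible triple. If its `t` were `< 1`, then `x + u ∈ U`, `z ∈ V`, and `c ∈ D′F(x + u, z)`
would produce a strictly larger admissible triple. So `t = 1`, `u ∈ Πₛ(X)` and `ρ(z, y + c) < ε`.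
-/

section FrechetRho

variable {E : Type*} [AddCommGroup E] [Module ℝ E] (p : ℕ → Seminorm ℝ E)

lemma frechetRho_term_nonneg (d : E) (n : ℕ) : 0 ≤ (2 : ℝ)⁻¹ ^ n * p n d / (1 + p n d) := by
  have := apply_nonneg (p n) d
  positivity

lemma frechetRho_term_le_pow (d : E) (n : ℕ) :
    (2 : ℝ)⁻¹ ^ n * p n d / (1 + p n d) ≤ (2 : ℝ)⁻¹ ^ n := by
  have := apply_nonneg (p n) d
  rw [mul_div_assoc]
  exact mul_le_of_le_one_right (by positivity) ((div_le_one (by linarith)).2 (by linarith))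

lemma frechetRho_term_le_seminorm (d : E) (n : ℕ) :
    (2 : ℝ)⁻¹ ^ n * p n d / (1 + p n d) ≤ p n d := by
  have := apply_nonneg (p n) d
  rw [div_le_iff₀ (by linarith)]
  have : (2 : ℝ)⁻¹ ^ n ≤ 1 := pow_le_one₀ (by norm_num) (by norm_num)
  nlinarith

lemma frechetRho_nonneg (x y : E) : 0 ≤ frechetRho p x y :=
  Real.iSup_nonneg fun n => frechetRho_term_nonneg p _ n

lemma le_frechetRho (x y : E) (n : ℕ) :
    (2 : ℝ)⁻¹ ^ n * p n (x - y) / (1 + p n (x - y)) ≤ frechetRho p x y :=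
  le_ciSup (f := fun n => (2 : ℝ)⁻¹ ^ n * p n (x - y) / (1 + p n (x - y))) ⟨1, by
    rintro _ ⟨m, rfl⟩
    exact (frechetRho_term_le_pow p _ m).trans (pow_le_one₀ (by norm_num) (by norm_num))⟩ n

lemma frechetRho_congr_sub {x y x' y' : E} (h : x - y = x' - y') :
    frechetRho p x y = frechetRho p x' y' := by
  rw [frechetRho, frechetRho, h]

lemma frechetRho_comm (x y : E) : frechetRho p x y = frechetRho p y x := by
  simp only [frechetRho, ← neg_sub y x, map_neg_eq_map]

lemma frechetRho_self (x : E) : frechetRho p x x = 0 := by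
  simp [frechetRho]

lemma frechetRho_triangle (x y z : E) :
    frechetRho p x z ≤ frechetRho p x y + frechetRho p y z := by
  refine ciSup_le fun n => ?_
  refine le_trans ?_ (add_le_add (le_frechetRho p x y n) (le_frechetRho p y z n))
  set a := p n (x - y)
  set b := p n (y - z)
  have ha : 0 ≤ a := apply_nonneg _ _
  have hb : 0 ≤ b := apply_nonneg _ _
  have hab : p n (x - z) ≤ a + b := by
    simpa only [sub_add_sub_cancel] using map_add_le_add (p n) (x - y) (y - z)
  simp only [mul_div_assoc, ← mul_add]
  gcongr (2 : ℝ)⁻¹ ^ n * ?_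
  -- `r ↦ r / (1 + r)` is monotone and subadditive on `[0, ∞)`
  calc p n (x - z) / (1 + p n (x - z)) ≤ (a + b) / (1 + (a + b)) := by
        rw [div_le_div_iff₀ (by positivity) (by positivity)]; nlinarith
    _ ≤ a / (1 + a) + b / (1 + b) := by
        rw [add_div]; gcongr <;> linarith

lemma exists_pos_frechetRho_lt (s : ℕ → ℝ) {ε : ℝ} (hε : 0 < ε) :
    ∃ δ > 0, ∀ x y : E, (∀ n, p n (x - y) ≤ δ * s n) → frechetRho p x y < ε := by
  obtain ⟨N, hN⟩ : ∃ N : ℕ, (2 : ℝ)⁻¹ ^ N < ε := exists_pow_lt_of_lt_one hε (by norm_num)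
  have hsmall : ∀ᶠ δ in 𝓝[>] (0 : ℝ), ∀ n ∈ Finset.range N, δ * s n < ε / 2 :=
    nhdsWithin_le_nhds <| (Filter.eventually_all_finset _).2 fun n _ =>
      ((continuous_mul_const (s n)).tendsto' 0 0 (zero_mul _)).eventually_lt_const (half_pos hε)
  obtain ⟨δ, hδ, hδpos⟩ := (hsmall.and self_mem_nhdsWithin).exists
  refine ⟨δ, hδpos, fun x y hxy => ?_⟩
  refine lt_of_le_of_lt (ciSup_le fun n => ?_) (max_lt (half_lt_self hε) hN)
  rcases lt_or_ge n N with hn | hn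
  · exact le_max_of_le_left <| (frechetRho_term_le_seminorm p _ n).trans <|
      (hxy n).trans (hδ n (Finset.mem_range.2 hn)).le
  · exact le_max_of_le_right <| (frechetRho_term_le_pow p _ n).trans <|
      pow_le_pow_of_le_one (by norm_num) (by norm_num) hn

lemma tendsto_seminorm_sub_of_tendsto_frechetRho {v : ℕ → E} {x : E}
    (h : Tendsto (fun k => frechetRho p (v k) x) atTop (𝓝 0)) (n : ℕ) :
    Tendsto (fun k => p n (v k - x)) atTop (𝓝 0) := by
  refine tendsto_order.2 ⟨fun e he => Eventually.of_forall fun k => he.trans_le (apply_nonneg _ _),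
    fun e he => ?_⟩
  have hpos : 0 < (2 : ℝ)⁻¹ ^ n * (e / (1 + e)) := by positivity
  filter_upwards [h.eventually_lt_const hpos] with k hk
  by_contra! hle
  have hmono : e / (1 + e) ≤ p n (v k - x) / (1 + p n (v k - x)) := by
    rw [div_le_div_iff₀ (by positivity) (by linarith [apply_nonneg (p n) (v k - x)])]; nlinarith
  have := le_frechetRho p (v k) x n
  rw [mul_div_assoc] at this
  nlinarith [pow_pos (show (0 : ℝ) < 2⁻¹ by norm_num) n]

lemma exists_pos_frechetRho_add_smul_lt (c : E) {ε : ℝ} (hε : 0 < ε) :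
    ∃ δ > 0, ∀ (w : E) (t : ℝ), |t| ≤ δ → frechetRho p (w + t • c) w < ε := by
  obtain ⟨δ, hδ, h⟩ := exists_pos_frechetRho_lt p (fun n => p n c) hε
  refine ⟨δ, hδ, fun w t ht => h _ _ fun n => ?_⟩
  rw [add_sub_cancel_left, map_smul_eq_mul, Real.norm_eq_abs]
  exact mul_le_mul_of_nonneg_right ht (apply_nonneg _ _)

lemma tendsto_frechetRho_add_smul (w c : E) {t : ℕ → ℝ} {t₀ : ℝ} (ht : Tendsto t atTop (𝓝 t₀)) :
    Tendsto (fun k => frechetRho p (w + t k • c) (w + t₀ • c)) atTop (𝓝 0) := by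
  refine Metric.tendsto_atTop.2 fun ε hε => ?_
  obtain ⟨δ, hδ, h⟩ := exists_pos_frechetRho_add_smul_lt p c hε
  obtain ⟨N, hN⟩ := Metric.tendsto_atTop.1 ht δ hδ
  refine ⟨N, fun k hk => ?_⟩
  rw [Real.dist_0_eq_abs, abs_of_nonneg (frechetRho_nonneg p _ _),
    frechetRho_congr_sub p (y' := w + t₀ • c) (x' := w + t₀ • c + (t k - t₀) • c) (by module)]
  exact h _ _ (hN k hk).le

lemma frechetRho_cauchy_of_modulus {τ : ℕ → ℝ} (hτ : CauchySeq τ) {v : ℕ → E}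
    (hmod : ∀ ε > 0, ∃ δ > 0, ∀ m k, τ m ≤ τ k → τ k - τ m < δ → frechetRho p (v k) (v m) < ε) :
    ∀ ε > 0, ∃ N, ∀ m ≥ N, ∀ k ≥ N, frechetRho p (v m) (v k) < ε := by
  intro ε hε
  obtain ⟨δ, hδ, h⟩ := hmod ε hε
  obtain ⟨N, hN⟩ := Metric.cauchySeq_iff.1 hτ δ hδ
  refine ⟨N, fun m hm k hk => ?_⟩
  have hmk := hN m hm k hk
  rw [Real.dist_eq] at hmk
  rcases le_total (τ m) (τ k) with hle | hle
  · rw [frechetRho_comm]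
    exact h m k hle (by linarith [neg_abs_le (τ m - τ k)])
  · exact h k m hle (by linarith [le_abs_self (τ m - τ k)])

end FrechetRho

lemma exists_pos_segment_margin {Y : Type*} [AddCommGroup Y] [Module ℝ Y] (q : ℕ → Seminorm ℝ Y)
    {V : Set Y} (hV : RhoOpen q V) {y c : Y} (hseg : ∀ t ∈ Icc (0 : ℝ) 1, y + t • c ∈ V) :
    ∃ δ > 0, ∀ t ∈ Icc (0 : ℝ) 1, ∀ w, frechetRho q w (y + t • c) < δ → w ∈ V := by
  by_contra! h
  choose t ht w hw hwV using fun k : ℕ => h (1 / (k + 1)) (by positivity)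
  obtain ⟨t₀, ht₀, φ, hφ, hlim⟩ := isCompact_Icc.tendsto_subseq ht
  obtain ⟨e, he, hball⟩ := hV _ (hseg t₀ ht₀)
  have hbound : Tendsto (fun k => 1 / ((φ k : ℝ) + 1) +
      frechetRho q (y + t (φ k) • c) (y + t₀ • c)) atTop (𝓝 0) := by
    simpa using (tendsto_one_div_add_atTop_nhds_zero_nat.comp hφ.tendsto_atTop).add
      (tendsto_frechetRho_add_smul q y c hlim)
  have hdist : Tendsto (fun k => frechetRho q (w (φ k)) (y + t₀ • c)) atTop (𝓝 0) :=
    tendsto_of_tendsto_of_tendsto_of_le_of_le tendsto_const_nhds hbound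
      (fun k => frechetRho_nonneg q _ _) fun k =>
        (frechetRho_triangle q _ _ _).trans (add_le_add_left (hw (φ k)).le _)
  obtain ⟨k, hk⟩ := (hdist.eventually_lt_const he).exists
  exact hwV (φ k) (hball _ (by rwa [frechetRho_comm]))

lemma exists_seq_tendsto_sSup_image {ι : Type*} (f : ι → ℝ) {K : Set ι} (hK : K.Nonempty)
    (hbdd : BddAbove (f '' K)) :
    ∃ g : ℕ → ι, (∀ k, g k ∈ K) ∧ Tendsto (fun k => f (g k)) atTop (𝓝 (sSup (f '' K))) ∧
      ∀ i ∈ K, ∀ᶠ k in atTop, f i ≤ f (g k) := by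
  by_cases hmax : ∃ i ∈ K, f i = sSup (f '' K)
  · obtain ⟨i, hi, hfi⟩ := hmax
    refine ⟨fun _ => i, fun _ => hi, by simp [hfi], fun j hj => ?_⟩
    exact Eventually.of_forall fun _ => hfi ▸ le_csSup hbdd (mem_image_of_mem f hj)
  · obtain ⟨v, -, hv, hvK⟩ := exists_seq_tendsto_sSup (hK.image f) hbdd
    choose g hgK hgv using hvK
    refine ⟨g, hgK, by simpa [hgv] using hv, fun i hi => ?_⟩
    have hlt : f i < sSup (f '' K) :=
      (le_csSup hbdd (mem_image_of_mem f hi)).lt_of_ne fun h => hmax ⟨i, hi, h⟩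
    filter_upwards [hv.eventually_const_lt hlt] with k hk
    exact (hgv k).symm ▸ hk.le

def FrechetComplete {E : Type*} [AddCommGroup E] [Module ℝ E] (p : ℕ → Seminorm ℝ E) : Prop :=
  ∀ u : ℕ → E, (∀ ε > (0 : ℝ), ∃ N, ∀ m ≥ N, ∀ k ≥ N, frechetRho p (u m) (u k) < ε) →
    ∃ x : E, Tendsto (fun k => frechetRho p (u k) x) atTop (𝓝 0)

def HasClosedGraph {X Y : Type*} [AddCommGroup X] [Module ℝ X] [AddCommGroup Y] [Module ℝ Y]
    (p : ℕ → Seminorm ℝ X) (q : ℕ → Seminorm ℝ Y) (F : X → Set Y) : Prop :=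
  ∀ (u : ℕ → X) (w : ℕ → Y) (x : X) (y : Y), (∀ k, w k ∈ F (u k)) →
    Tendsto (fun k => frechetRho p (u k) x) atTop (𝓝 0) →
    Tendsto (fun k => frechetRho q (w k) y) atTop (𝓝 0) → y ∈ F x

structure ApproxTriple (X Y : Type*) where
  t : ℝ
  u : X
  z : Y

namespace ApproxTriple

variable {X Y : Type*} [AddCommGroup X] [Module ℝ X] [AddCommGroup Y] [Module ℝ Y]
  (p : ℕ → Seminorm ℝ X) (q : ℕ → Seminorm ℝ Y) (s : ℕ → ℝ) (c : Y) (η : ℝ)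

def Le (a b : ApproxTriple X Y) : Prop :=
  a.t ≤ b.t ∧ (∀ n, p n (b.u - a.u) ≤ (b.t - a.t) * s n) ∧
    frechetRho q b.z (a.z + (b.t - a.t) • c) ≤ η * (b.t - a.t)

variable {p q s c η}

theorem Le.refl (a : ApproxTriple X Y) : Le p q s c η a a := by
  simp [Le, frechetRho_self]

theorem Le.trans {a b d : ApproxTriple X Y} (hab : Le p q s c η a b) (hbd : Le p q s c η b d) :
    Le p q s c η a d := by
  obtain ⟨hab_t, hab_u, hab_z⟩ := hab
  obtain ⟨hbd_t, hbd_u, hbd_z⟩ := hbd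
  refine ⟨hab_t.trans hbd_t, fun n => ?_, ?_⟩
  · calc p n (d.u - a.u) ≤ p n (d.u - b.u) + p n (b.u - a.u) := by
          simpa only [sub_add_sub_cancel] using map_add_le_add (p n) (d.u - b.u) (b.u - a.u)
      _ ≤ (d.t - b.t) * s n + (b.t - a.t) * s n := add_le_add (hbd_u n) (hab_u n)
      _ = (d.t - a.t) * s n := by ring
  · calc frechetRho q d.z (a.z + (d.t - a.t) • c)
        ≤ frechetRho q d.z (b.z + (d.t - b.t) • c) +
            frechetRho q (b.z + (d.t - b.t) • c) (a.z + (d.t - a.t) • c) :=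
          frechetRho_triangle q _ _ _
      _ = frechetRho q d.z (b.z + (d.t - b.t) • c) + frechetRho q b.z (a.z + (b.t - a.t) • c) := by
          congr 1; exact frechetRho_congr_sub q (by module)
      _ ≤ η * (d.t - b.t) + η * (b.t - a.t) := add_le_add hbd_z hab_z
      _ = η * (d.t - a.t) := by ring

theorem Le.symm_of_t_eq {a b : ApproxTriple X Y} (h : Le p q s c η a b) (ht : a.t = b.t) :
    Le p q s c η b a := by
  obtain ⟨-, hu, hz⟩ := h
  simp only [Le, ht, sub_self, zero_mul, zero_smul, add_zero, mul_zero, le_refl, true_and]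
    at hu hz ⊢
  refine ⟨fun n => ?_, ?_⟩
  · rw [← neg_sub, map_neg_eq_map]; exact hu n
  · rwa [frechetRho_comm]

theorem Le.of_isChain {S : Set (ApproxTriple X Y)} {K : Set S}
    (hK : IsChain (fun a b : S => Le p q s c η a b) K) {a b : S} (ha : a ∈ K) (hb : b ∈ K)
    (hab : a.1.t ≤ b.1.t) : Le p q s c η a b := by
  rcases eq_or_ne a b with rfl | hne
  · exact Le.refl _
  rcases hK ha hb hne with h | h
  · exact h
  · exact h.symm_of_t_eq (le_antisymm h.1 hab)

theorem exists_pos_frechetRho_u_lt (hs : ∀ n, 0 ≤ s n) {ε : ℝ} (hε : 0 < ε) :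
    ∃ δ > 0, ∀ a b : ApproxTriple X Y, Le p q s c η a b → b.t - a.t < δ →
      frechetRho p b.u a.u < ε := by
  obtain ⟨δ, hδ, h⟩ := exists_pos_frechetRho_lt p s hε
  exact ⟨δ, hδ, fun a b hab hlt => h _ _ fun n =>
    (hab.2.1 n).trans (mul_le_mul_of_nonneg_right hlt.le (hs n))⟩

theorem exists_pos_frechetRho_z_lt (hη : 0 ≤ η) {ε : ℝ} (hε : 0 < ε) :
    ∃ δ > 0, ∀ a b : ApproxTriple X Y, Le p q s c η a b → b.t - a.t < δ →
      frechetRho q b.z a.z < ε := by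
  obtain ⟨δ, hδ, h⟩ := exists_pos_frechetRho_add_smul_lt q c (half_pos hε)
  refine ⟨min δ (ε / (2 * (η + 1))), by positivity, fun a b hab hlt => ?_⟩
  have hΔ : 0 ≤ b.t - a.t := sub_nonneg.2 hab.1
  have hηΔ : η * (b.t - a.t) < ε / 2 := by
    calc η * (b.t - a.t) ≤ η * (ε / (2 * (η + 1))) :=
          mul_le_mul_of_nonneg_left (hlt.le.trans (min_le_right _ _)) hη
      _ < ε / 2 := by
          rw [mul_div_assoc', div_lt_div_iff₀ (by positivity) two_pos]; nlinarith
  calc frechetRho q b.z a.z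
      ≤ frechetRho q b.z (a.z + (b.t - a.t) • c) + frechetRho q (a.z + (b.t - a.t) • c) a.z :=
        frechetRho_triangle q _ _ _
    _ < ε / 2 + ε / 2 := add_lt_add_of_le_of_lt (hab.2.2.trans hηΔ.le)
        (h _ _ (by rw [abs_of_nonneg hΔ]; exact hlt.le.trans (min_le_left _ _)))
    _ = ε := add_halves ε

theorem le_mk_of_tendsto {a : ApproxTriple X Y} {b : ℕ → ApproxTriple X Y} {t : ℝ} {u : X} {z : Y}
    (hle : ∀ᶠ k in atTop, Le p q s c η a (b k)) (ht : Tendsto (fun k => (b k).t) atTop (𝓝 t))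
    (hu : Tendsto (fun k => frechetRho p (b k).u u) atTop (𝓝 0))
    (hz : Tendsto (fun k => frechetRho q (b k).z z) atTop (𝓝 0)) :
    Le p q s c η a ⟨t, u, z⟩ := by
  refine ⟨ge_of_tendsto ht (hle.mono fun k hk => hk.1), fun n => ?_, ?_⟩
  · have hlim : Tendsto (fun k => p n ((b k).u - u) + ((b k).t - a.t) * s n) atTop
        (𝓝 (0 + (t - a.t) * s n)) :=
      (tendsto_seminorm_sub_of_tendsto_frechetRho p hu n).add ((ht.sub_const _).mul_const _)
    refine zero_add ((t - a.t) * s n) ▸ ge_of_tendsto hlim (hle.mono fun k hk => ?_)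
    calc p n (u - a.u) ≤ p n (u - (b k).u) + p n ((b k).u - a.u) := by
          simpa only [sub_add_sub_cancel] using map_add_le_add (p n) (u - (b k).u) ((b k).u - a.u)
      _ ≤ p n ((b k).u - u) + ((b k).t - a.t) * s n := by
          rw [← neg_sub, map_neg_eq_map]; gcongr; exact hk.2.1 n
  · have hlim : Tendsto (fun k => frechetRho q (b k).z z + η * ((b k).t - a.t) +
        frechetRho q (a.z + ((b k).t - a.t) • c) (a.z + (t - a.t) • c)) atTop
        (𝓝 (0 + η * (t - a.t) + 0)) :=
      (hz.add ((ht.sub_const _).const_mul η)).add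
        (tendsto_frechetRho_add_smul q a.z c (ht.sub_const _))
    rw [add_zero, zero_add] at hlim
    refine ge_of_tendsto hlim (hle.mono fun k hk => ?_)
    calc frechetRho q z (a.z + (t - a.t) • c)
        ≤ frechetRho q z (b k).z + frechetRho q (b k).z (a.z + (t - a.t) • c) :=
          frechetRho_triangle q _ _ _
      _ ≤ frechetRho q z (b k).z + (frechetRho q (b k).z (a.z + ((b k).t - a.t) • c) +
            frechetRho q (a.z + ((b k).t - a.t) • c) (a.z + (t - a.t) • c)) :=
          by gcongr; exact frechetRho_triangle q _ _ _
      _ ≤ _ := by rw [frechetRho_comm q z]; linarith [hk.2.2]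

end ApproxTriple

namespace ApproxTriple

variable {X Y : Type*} [AddCommGroup X] [Module ℝ X] [AddCommGroup Y] [Module ℝ Y]
  (p : ℕ → Seminorm ℝ X) (q : ℕ → Seminorm ℝ Y) (s : ℕ → ℝ) (c : Y) (η : ℝ)
  (F : X → Set Y) (x : X) (y : Y)

def IsAdmissible (a : ApproxTriple X Y) : Prop :=
  a.t ≤ 1 ∧ a.z ∈ F (x + a.u) ∧ Le p q s c η ⟨0, 0, y⟩ a

variable {p q s c η F x y}

theorem le_mk_zero_iff {a : ApproxTriple X Y} :
    Le p q s c η ⟨0, 0, y⟩ a ↔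
      0 ≤ a.t ∧ (∀ n, p n a.u ≤ a.t * s n) ∧ frechetRho q a.z (y + a.t • c) ≤ η * a.t := by
  simp [Le]

theorem exists_upperBound_of_isChain (hX : FrechetComplete p) (hY : FrechetComplete q)
    (hF : HasClosedGraph p q F) (hs : ∀ n, 0 ≤ s n) (hη : 0 ≤ η)
    {K : Set {a // IsAdmissible p q s c η F x y a}}
    (hK : IsChain (fun a b => Le p q s c η a.1 b.1) K) (hKne : K.Nonempty) :
    ∃ ub : {a // IsAdmissible p q s c η F x y a}, ∀ a ∈ K, Le p q s c η a.1 ub.1 := by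
  obtain ⟨a₀, ha₀⟩ := hKne
  have hbdd : BddAbove ((fun a => a.1.t) '' K) := ⟨1, by rintro _ ⟨a, -, rfl⟩; exact a.2.1⟩
  obtain ⟨g, hgK, hgt, hev⟩ := exists_seq_tendsto_sSup_image (fun a => a.1.t) ⟨a₀, ha₀⟩ hbdd
  have hord : ∀ m k, (g m).1.t ≤ (g k).1.t → Le p q s c η (g m).1 (g k).1 :=
    fun m k => Le.of_isChain hK (hgK m) (hgK k)
  obtain ⟨u, hu⟩ := hX (fun k => (g k).1.u) <| frechetRho_cauchy_of_modulus p hgt.cauchySeq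
    fun ε hε => by
      obtain ⟨δ, hδ, h⟩ := exists_pos_frechetRho_u_lt (p := p) (q := q) (c := c) (η := η) hs hε
      exact ⟨δ, hδ, fun m k hmk => h _ _ (hord m k hmk)⟩
  obtain ⟨z, hz⟩ := hY (fun k => (g k).1.z) <| frechetRho_cauchy_of_modulus q hgt.cauchySeq
    fun ε hε => by
      obtain ⟨δ, hδ, h⟩ := exists_pos_frechetRho_z_lt (p := p) (s := s) (c := c) hη hε
      exact ⟨δ, hδ, fun m k hmk => h _ _ (hord m k hmk)⟩
  have hub : ∀ a ∈ K, Le p q s c η a.1 ⟨sSup ((fun a => a.1.t) '' K), u, z⟩ := fun a ha =>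
    le_mk_of_tendsto ((hev a ha).mono fun k hk => Le.of_isChain hK ha (hgK k) hk) hgt hu hz
  have hgraph : z ∈ F (x + u) := by
    refine hF _ _ _ _ (fun k => (g k).2.2.1) ?_ hz
    exact hu.congr fun k => frechetRho_congr_sub p (add_sub_add_left_eq_sub _ _ x).symm
  have ht : sSup ((fun a => a.1.t) '' K) ≤ 1 :=
    csSup_le (Set.Nonempty.image _ ⟨a₀, ha₀⟩) (by rintro _ ⟨a, -, rfl⟩; exact a.2.1)
  exact ⟨⟨⟨_, u, z⟩, ht, hgraph, a₀.2.2.2.trans (hub a₀ ha₀)⟩, hub⟩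

theorem exists_isAdmissible_t_eq_one (hX : FrechetComplete p) (hY : FrechetComplete q)
    (hF : HasClosedGraph p q F) (hs : ∀ n, 0 ≤ s n) (hη : 0 ≤ η) (hxy : y ∈ F x)
    (hstep : ∀ a, IsAdmissible p q s c η F x y a → a.t < 1 →
      ∃ b, IsAdmissible p q s c η F x y b ∧ Le p q s c η a b ∧ a.t < b.t) :
    ∃ a, IsAdmissible p q s c η F x y a ∧ a.t = 1 := by
  have : Nonempty {a // IsAdmissible p q s c η F x y a} :=
    ⟨⟨⟨0, 0, y⟩, zero_le_one, by simpa using hxy, Le.refl _⟩⟩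
  obtain ⟨m, hm⟩ := exists_maximal_of_nonempty_chains_bounded
    (r := fun a b : {a // IsAdmissible p q s c η F x y a} => Le p q s c η a.1 b.1)
    (fun K hK hKne => exists_upperBound_of_isChain hX hY hF hs hη hK hKne)
    (fun hab hbd => Le.trans hab hbd)
  refine ⟨m.1, m.2, le_antisymm m.2.1 (not_lt.1 fun hlt => ?_)⟩
  obtain ⟨b, hb, hmb, hlt'⟩ := hstep m.1 m.2 hlt
  exact hlt'.not_ge (hm ⟨b, hb⟩ hmb).1

theorem exists_isAdmissible_lt_of_mem_contVar {a : ApproxTriple X Y}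
    (hc : c ∈ contVar q F (x + a.u) a.z (PiS p s)) (ha : IsAdmissible p q s c η F x y a)
    (ht : a.t < 1) (hη : 0 < η) :
    ∃ b, IsAdmissible p q s c η F x y b ∧ Le p q s c η a b ∧ a.t < b.t := by
  obtain ⟨τ, v, w, hτpos, hτ, hv, hw, hlim⟩ := hc
  obtain ⟨k, hk1, hk2⟩ :=
    ((hτ.eventually_lt_const (sub_pos.2 ht)).and (hlim.eventually_lt_const hη)).exists
  have hab : Le p q s c η a ⟨a.t + τ k, a.u + τ k • v k, w k⟩ := by
    refine ⟨by linarith [hτpos k], fun n => ?_, ?_⟩ <;> simp only [add_sub_cancel_left]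
    · rw [map_smul_eq_mul, Real.norm_eq_abs, abs_of_pos (hτpos k)]
      exact mul_le_mul_of_nonneg_left (hv k n) (hτpos k).le
    · exact ((div_lt_iff₀ (hτpos k)).1 hk2).le
  exact ⟨_, ⟨by linarith, by simpa only [add_assoc] using hw k, ha.2.2.trans hab⟩, hab,
    by linarith [hτpos k]⟩

end ApproxTriple

theorem stmt11_general {X Y : Type*} [AddCommGroup X] [Module ℝ X] [AddCommGroup Y] [Module ℝ Y]
    (p : ℕ → Seminorm ℝ X) (q : ℕ → Seminorm ℝ Y)
    (hcompX : ∀ u : ℕ → X,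
      (∀ ε > (0 : ℝ), ∃ N, ∀ m ≥ N, ∀ k ≥ N, frechetRho p (u m) (u k) < ε) →
      ∃ x : X, Tendsto (fun k => frechetRho p (u k) x) atTop (𝓝 0))
    (hcompY : ∀ u : ℕ → Y,
      (∀ ε > (0 : ℝ), ∃ N, ∀ m ≥ N, ∀ k ≥ N, frechetRho q (u m) (u k) < ε) →
      ∃ y : Y, Tendsto (fun k => frechetRho q (u k) y) atTop (𝓝 0))
    (F : X → Set Y)
    (hgraph : ∀ (u : ℕ → X) (w : ℕ → Y) (x : X) (y : Y), (∀ k, w k ∈ F (u k)) →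
      Tendsto (fun k => frechetRho p (u k) x) atTop (𝓝 0) →
      Tendsto (fun k => frechetRho q (w k) y) atTop (𝓝 0) → y ∈ F x)
    (U : Set X) (V : Set Y) (hV : RhoOpen q V)
    (s : ℕ → ℝ) (hs : ∀ n, 0 ≤ s n)
    (C : Set Y)
    (hD : ∀ x y, y ∈ F x → x ∈ U → y ∈ V → C ⊆ contVar q F x y (PiS p s)) :
    ∀ x y, y ∈ F x → (∀ u ∈ PiS p s, x + u ∈ U) →
      (∀ c ∈ C, ∀ t ∈ Set.Icc (0 : ℝ) 1, y + t • c ∈ V) →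
      ∀ c ∈ C, y + c ∈ rhoClosure q (⋃ u ∈ PiS p s, F (x + u)) := by
  intro x y hxy hxU hyV c hc ε hε
  obtain ⟨δ, hδ, hmargin⟩ := exists_pos_segment_margin q hV (hyV c hc)
  obtain ⟨η, hη, hηδ, hηε⟩ : ∃ η, 0 < η ∧ η < δ ∧ η < ε :=
    ⟨min δ ε / 2, by positivity, by linarith [min_le_left δ ε], by linarith [min_le_right δ ε]⟩
  obtain ⟨a, ⟨-, haF, ha⟩, ha1⟩ := ApproxTriple.exists_isAdmissible_t_eq_one (c := c) hcompX hcompY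
    hgraph hs hη.le hxy fun a ha hlt => by
      obtain ⟨h0, hu, hz⟩ := ApproxTriple.le_mk_zero_iff.1 ha.2.2
      have hmem : a.u ∈ PiS p s := fun n => (hu n).trans (mul_le_of_le_one_left (hs n) ha.1)
      have hzV : a.z ∈ V := hmargin a.t ⟨h0, ha.1⟩ a.z
        (hz.trans_lt ((mul_le_of_le_one_right hη.le ha.1).trans_lt hηδ))
      exact ApproxTriple.exists_isAdmissible_lt_of_mem_contVar (hD _ _ ha.2.1 (hxU _ hmem) hzV hc)
        ha hlt hη
  obtain ⟨-, hu, hz⟩ := ApproxTriple.le_mk_zero_iff.1 ha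
  rw [ha1] at hu hz
  refine ⟨a.z, mem_biUnion (fun n => by simpa using hu n) haF, ?_⟩
  simpa using hz.trans_lt (by simpa using hηε)

/-- cornerstone theorem: if `D′F(x,y)(Πₛ(X)) ⊇ C` on
`(U × V) ∩ graph F`, then `cl F(x + Πₛ(X)) ⊇ y + C` whenever `(x,y) ∈ graph F`,
`x + Πₛ(X) ⊆ U` and `[y, y + C] ⊆ V`. -/
theorem stmt11 {X Y : Type*} [AddCommGroup X] [Module ℝ X] [AddCommGroup Y] [Module ℝ Y]
    (p : ℕ → Seminorm ℝ X) (q : ℕ → Seminorm ℝ Y)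
    (hsepX : ∀ x : X, (∀ n, p n x = 0) → x = 0)
    (hsepY : ∀ y : Y, (∀ n, q n y = 0) → y = 0)
    (hcompX : ∀ u : ℕ → X,
      (∀ ε > (0 : ℝ), ∃ N, ∀ m ≥ N, ∀ k ≥ N, frechetRho p (u m) (u k) < ε) →
      ∃ x : X, Tendsto (fun k => frechetRho p (u k) x) atTop (𝓝 0))
    (hcompY : ∀ u : ℕ → Y,
      (∀ ε > (0 : ℝ), ∃ N, ∀ m ≥ N, ∀ k ≥ N, frechetRho q (u m) (u k) < ε) →
      ∃ y : Y, Tendsto (fun k => frechetRho q (u k) y) atTop (𝓝 0))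
    (F : X → Set Y)
    (hgraph : ∀ (u : ℕ → X) (w : ℕ → Y) (x : X) (y : Y), (∀ k, w k ∈ F (u k)) →
      Tendsto (fun k => frechetRho p (u k) x) atTop (𝓝 0) →
      Tendsto (fun k => frechetRho q (w k) y) atTop (𝓝 0) → y ∈ F x)
    (U : Set X) (V : Set Y) (hU : RhoOpen p U) (hV : RhoOpen q V)
    (hne : ∃ x y, y ∈ F x ∧ x ∈ U ∧ y ∈ V)
    (s : ℕ → ℝ) (hs : ∀ n, 0 ≤ s n)
    (C : Set Y) (hC : C.Nonempty)
    (hD : ∀ x y, y ∈ F x → x ∈ U → y ∈ V → C ⊆ contVar q F x y (PiS p s)) :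
    ∀ x y, y ∈ F x → (∀ u ∈ PiS p s, x + u ∈ U) →
      (∀ c ∈ C, ∀ t ∈ Set.Icc (0 : ℝ) 1, y + t • c ∈ V) →
      ∀ c ∈ C, y + c ∈ rhoClosure q (⋃ u ∈ PiS p s, F (x + u)) :=
  stmt11_general p q hcompX hcompY F hgraph U V hV s hs C hD
end

section
/- Under the hypotheses of the cornerstone theorem (F : X ⇉ Y with closed graph between Fréchet spaces, U, V open, D′F(x,y)(Πₛ(X)) ⊇ C for all (x,y) ∈ (U × V) ∩ graph(F)), if additionally Πₛ(X) is compact, then for all (x,y) ∈ graph(F) with x + Πₛ(X) ⊆ U and [y, y + C] ⊆ V, the set F(x + Πₛ(X)) itself (without closure) contains y + C. -/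
/-!
For fixed `ε > 0`, call a stage `(τ, u, w)` reachable if `u ∈ τ • Πₛ(X)`, `w ∈ F(x + u)` and
`ρ(w, y + τ c) ≤ ε τ`. Greedily extending reachable stages, each time to within `1/(k+1)` of the
largest attainable time, produces a chain whose limit (by completeness and the closed graph) is
again reachable; if its time were `< 1`, the contingent variation at the limit would give a
further step that the greedy choices could not have missed. So time `1` is reached, and
`y + c` lies in the `ρ`-closure of `F(x + Πₛ(X))`. Compactness of `Πₛ(X)` and the closed graph
make that set `ρ`-closed: a subsequence of approximating preimages converges.
-/

open Filter Topology Set Pointwise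

noncomputable def frechetTerm (n : ℕ) (r : ℝ) : ℝ := (2 : ℝ)⁻¹ ^ n * r / (1 + r)

section FrechetTerm

variable {r r₁ r₂ : ℝ}

theorem frechetTerm_nonneg (n : ℕ) (hr : 0 ≤ r) : 0 ≤ frechetTerm n r := by
  unfold frechetTerm; positivity

theorem frechetTerm_le_pow (n : ℕ) (hr : 0 ≤ r) : frechetTerm n r ≤ (2 : ℝ)⁻¹ ^ n := by
  rw [frechetTerm, mul_div_assoc]
  exact mul_le_of_le_one_right (by positivity) ((div_le_one (by positivity)).2 (by linarith))

theorem frechetTerm_le_self (n : ℕ) (hr : 0 ≤ r) : frechetTerm n r ≤ r := by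
  rw [frechetTerm, mul_div_assoc]
  calc (2 : ℝ)⁻¹ ^ n * (r / (1 + r)) ≤ r / (1 + r) :=
        mul_le_of_le_one_left (by positivity) (pow_le_one₀ (by norm_num) (by norm_num))
    _ ≤ r := div_le_self hr (by linarith)

theorem frechetTerm_le_add (n : ℕ) (hr : 0 ≤ r) (hr₁ : 0 ≤ r₁) (hr₂ : 0 ≤ r₂)
    (h : r ≤ r₁ + r₂) : frechetTerm n r ≤ frechetTerm n r₁ + frechetTerm n r₂ := by
  have hmono : r / (1 + r) ≤ (r₁ + r₂) / (1 + (r₁ + r₂)) := by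
    rw [div_le_div_iff₀ (by linarith) (by linarith)]; nlinarith
  have hsplit : (r₁ + r₂) / (1 + (r₁ + r₂)) ≤ r₁ / (1 + r₁) + r₂ / (1 + r₂) := by
    rw [add_div]
    gcongr <;> linarith
  simp only [frechetTerm, mul_div_assoc, ← mul_add]
  gcongr
  exact hmono.trans hsplit

end FrechetTerm

section FrechetMetric

variable {Y : Type*} [AddCommGroup Y] [Module ℝ Y] (q : ℕ → Seminorm ℝ Y)

theorem frechetRho_eq_iSup (a b : Y) :
    frechetRho q a b = ⨆ n, frechetTerm n (q n (a - b)) := rfl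

theorem frechetTerm_le_frechetRho (n : ℕ) (a b : Y) :
    frechetTerm n (q n (a - b)) ≤ frechetRho q a b := by
  refine le_ciSup (f := fun m => frechetTerm m (q m (a - b))) ⟨1, ?_⟩ n
  rintro _ ⟨m, rfl⟩
  exact (frechetTerm_le_pow m (apply_nonneg _ _)).trans (pow_le_one₀ (by norm_num) (by norm_num))

theorem frechetRho_le {a b : Y} {M : ℝ} (h : ∀ n, frechetTerm n (q n (a - b)) ≤ M) :
    frechetRho q a b ≤ M :=
  ciSup_le h

theorem frechetRho_nonneg_s12 (a b : Y) : 0 ≤ frechetRho q a b :=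
  (frechetTerm_nonneg 0 (apply_nonneg _ _)).trans (frechetTerm_le_frechetRho q 0 a b)

theorem frechetRho_eq_of_sub_eq {a b a' b' : Y} (h : a - b = a' - b') :
    frechetRho q a b = frechetRho q a' b' := by
  simp only [frechetRho_eq_iSup, h]

theorem frechetRho_self_s12 (a : Y) : frechetRho q a a = 0 :=
  le_antisymm (frechetRho_le q fun n => by simp [frechetTerm]) (frechetRho_nonneg_s12 q a a)

theorem frechetRho_comm_s12 (a b : Y) : frechetRho q a b = frechetRho q b a := by
  simp only [frechetRho_eq_iSup, map_sub_rev]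

theorem frechetRho_triangle_s12 (a b c : Y) :
    frechetRho q a c ≤ frechetRho q a b + frechetRho q b c :=
  frechetRho_le q fun n =>
    (frechetTerm_le_add n (apply_nonneg _ _) (apply_nonneg _ _) (apply_nonneg _ _)
      (by simpa using map_add_le_add (q n) (a - b) (b - c))).trans
    (add_le_add (frechetTerm_le_frechetRho q n a b) (frechetTerm_le_frechetRho q n b c))

end FrechetMetric

section FrechetConvergence

variable {Y : Type*} [AddCommGroup Y] [Module ℝ Y] (q : ℕ → Seminorm ℝ Y) {ι : Type*}
  {l : Filter ι}

theorem tendsto_frechetRho_iff {a b : ι → Y} :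
    Tendsto (fun i => frechetRho q (a i) (b i)) l (𝓝 0) ↔
      ∀ n, Tendsto (fun i => q n (a i - b i)) l (𝓝 0) := by
  constructor
  · intro h n
    set r := fun i => q n (a i - b i)
    have hr : ∀ i, 0 ≤ r i := fun i => apply_nonneg _ _
    have hf : Tendsto (fun i => r i / (1 + r i)) l (𝓝 0) := by
      refine squeeze_zero (fun i => div_nonneg (hr i) (by linarith [hr i])) (fun i => ?_)
        (by simpa using h.const_mul ((2 : ℝ) ^ n))
      have := frechetTerm_le_frechetRho q n (a i) (b i)
      rw [frechetTerm, mul_div_assoc, inv_pow] at this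
      rwa [← inv_mul_le_iff₀ (by positivity)]
    -- `r` is recovered from `r / (1 + r)` through the map `f ↦ f / (1 - f)`, continuous at `0`.
    have hinv := hf.div (tendsto_const_nhds.sub hf) (by norm_num : (1 : ℝ) - 0 ≠ 0)
    rw [zero_div] at hinv
    refine hinv.congr fun i => ?_
    have : 1 + r i ≠ 0 := by linarith [hr i]
    change r i / (1 + r i) / (1 - r i / (1 + r i)) = r i
    field_simp
    ring
  · intro h
    refine Metric.tendsto_nhds.2 fun ε hε => ?_
    obtain ⟨N, hN⟩ := exists_pow_lt_of_lt_one (half_pos hε) (by norm_num : (2 : ℝ)⁻¹ < 1)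
    filter_upwards [(Finset.range N).eventually_all.2 fun n _ =>
      (h n).eventually (eventually_le_nhds (half_pos hε))] with i hi
    rw [Real.dist_eq, sub_zero, abs_of_nonneg (frechetRho_nonneg_s12 q _ _)]
    refine (frechetRho_le q fun n => ?_).trans_lt (half_lt_self hε)
    rcases lt_or_ge n N with hn | hn
    · exact (frechetTerm_le_self n (apply_nonneg _ _)).trans (hi n (Finset.mem_range.2 hn))
    · exact (frechetTerm_le_pow n (apply_nonneg _ _)).trans
        ((pow_le_pow_of_le_one (by norm_num) (by norm_num) hn).trans hN.le)

theorem tendsto_frechetRho_add_smul_s12 (a c : Y) {δ : ι → ℝ} {δ₀ : ℝ} (h : Tendsto δ l (𝓝 δ₀)) :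
    Tendsto (fun i => frechetRho q (a + δ i • c) (a + δ₀ • c)) l (𝓝 0) := by
  refine (tendsto_frechetRho_iff q).2 fun n => ?_
  have := ((h.sub_const δ₀).abs).mul_const (q n c)
  rw [sub_self, abs_zero, zero_mul] at this
  refine this.congr fun i => ?_
  rw [add_sub_add_left_eq_sub, ← sub_smul, map_smul_eq_mul, Real.norm_eq_abs]

theorem seminorm_le_of_tendsto [l.NeBot] (n : ℕ) {a : ι → Y} {a₀ : Y} {r : ι → ℝ} {r₀ : ℝ}
    (ha : Tendsto (fun i => frechetRho q (a i) a₀) l (𝓝 0)) (hr : Tendsto r l (𝓝 r₀))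
    (h : ∀ᶠ i in l, q n (a i) ≤ r i) : q n a₀ ≤ r₀ := by
  have hq : Tendsto (fun i => q n (a i)) l (𝓝 (q n a₀)) :=
    tendsto_iff_dist_tendsto_zero.2 <| squeeze_zero (fun _ => dist_nonneg)
      (fun i => abs_sub_map_le_sub (q n) _ _) ((tendsto_frechetRho_iff q).1 ha n)
  exact le_of_tendsto_of_tendsto hq hr h

theorem frechetRho_le_of_tendsto [l.NeBot] {a b : ι → Y} {a₀ b₀ : Y} {r : ι → ℝ} {r₀ : ℝ}
    (ha : Tendsto (fun i => frechetRho q (a i) a₀) l (𝓝 0))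
    (hb : Tendsto (fun i => frechetRho q (b i) b₀) l (𝓝 0)) (hr : Tendsto r l (𝓝 r₀))
    (h : ∀ᶠ i in l, frechetRho q (a i) (b i) ≤ r i) : frechetRho q a₀ b₀ ≤ r₀ := by
  have hbound := (ha.add hr).add hb
  rw [zero_add, add_zero] at hbound
  refine ge_of_tendsto hbound (h.mono fun i hi => ?_)
  have h₁ := frechetRho_triangle_s12 q a₀ (a i) b₀
  have h₂ := frechetRho_triangle_s12 q (a i) (b i) b₀
  rw [frechetRho_comm_s12 q a₀ (a i)] at h₁
  linarith

end FrechetConvergence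

section FrechetSpaces

variable {X Y : Type*} [AddCommGroup X] [Module ℝ X] [AddCommGroup Y] [Module ℝ Y]
  (p : ℕ → Seminorm ℝ X) (q : ℕ → Seminorm ℝ Y)

def RhoComplete : Prop :=
  ∀ u : ℕ → Y, (∀ ε > (0 : ℝ), ∃ N, ∀ m ≥ N, ∀ k ≥ N, frechetRho q (u m) (u k) < ε) →
    ∃ y : Y, Tendsto (fun k => frechetRho q (u k) y) atTop (𝓝 0)

def RhoSeqCompact (K : Set X) : Prop :=
  ∀ u : ℕ → X, (∀ k, u k ∈ K) →
    ∃ xb ∈ K, ∃ φ : ℕ → ℕ, StrictMono φ ∧ Tendsto (fun k => frechetRho p (u (φ k)) xb) atTop (𝓝 0)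

def RhoClosedGraph (F : X → Set Y) : Prop :=
  ∀ (u : ℕ → X) (w : ℕ → Y) (x : X) (y : Y), (∀ k, w k ∈ F (u k)) →
    Tendsto (fun k => frechetRho p (u k) x) atTop (𝓝 0) →
    Tendsto (fun k => frechetRho q (w k) y) atTop (𝓝 0) → y ∈ F x

variable {p q}

theorem RhoComplete.exists_tendsto (hq : RhoComplete q) {u : ℕ → Y}
    (hu : ∀ n, Tendsto (fun mk : ℕ × ℕ => q n (u mk.1 - u mk.2)) atTop (𝓝 0)) :
    ∃ y, Tendsto (fun k => frechetRho q (u k) y) atTop (𝓝 0) :=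
  hq u fun _ hε => eventually_atTop_prod_self'.1
    (((tendsto_frechetRho_iff q).2 hu).eventually (gt_mem_nhds hε))

theorem RhoClosedGraph.rhoClosure_biUnion_subset {F : X → Set Y} (hF : RhoClosedGraph p q F)
    {K : Set X} (hK : RhoSeqCompact p K) (x : X) :
    rhoClosure q (⋃ u ∈ K, F (x + u)) ⊆ ⋃ u ∈ K, F (x + u) := by
  intro y hy
  choose w hw hwy using fun k : ℕ => hy (1 / (k + 1)) Nat.one_div_pos_of_nat
  simp only [mem_iUnion] at hw
  choose u hu hwu using hw
  obtain ⟨u₀, hu₀, φ, hφ, hφu⟩ := hK u hu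
  refine mem_biUnion hu₀ (hF (fun k => x + u (φ k)) (fun k => w (φ k)) _ _ (fun k => hwu _)
    (hφu.congr fun k => frechetRho_eq_of_sub_eq p (add_sub_add_left_eq_sub _ _ x).symm) ?_)
  exact squeeze_zero (fun _ => frechetRho_nonneg_s12 q _ _) (fun k => (hwy (φ k)).le)
    (tendsto_one_div_add_atTop_nhds_zero_nat.comp hφ.tendsto_atTop)

theorem RhoOpen.exists_forall_segment {V : Set Y} (hV : RhoOpen q V) {y c : Y}
    (hseg : ∀ t ∈ Icc (0 : ℝ) 1, y + t • c ∈ V) :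
    ∃ ε > 0, ∀ t ∈ Icc (0 : ℝ) 1, ∀ z, frechetRho q z (y + t • c) ≤ ε → z ∈ V := by
  by_contra! h
  choose t ht z hz hzV using fun k : ℕ => h (1 / (k + 1)) Nat.one_div_pos_of_nat
  obtain ⟨t₀, ht₀, φ, hφ, htφ⟩ := isCompact_Icc.tendsto_subseq ht
  obtain ⟨δ, hδ, hδV⟩ := hV _ (hseg t₀ ht₀)
  have hlim : Tendsto (fun k => frechetRho q (y + t₀ • c) (z (φ k))) atTop (𝓝 0) := by
    have hbound := (tendsto_frechetRho_add_smul_s12 q y c htφ).add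
      (tendsto_one_div_add_atTop_nhds_zero_nat.comp hφ.tendsto_atTop)
    rw [add_zero] at hbound
    refine squeeze_zero (fun _ => frechetRho_nonneg_s12 q _ _) (fun k => ?_) hbound
    have h₁ := frechetRho_triangle_s12 q (y + t₀ • c) (y + t (φ k) • c) (z (φ k))
    have h₂ := frechetRho_comm_s12 q (y + t₀ • c) (y + t (φ k) • c)
    have h₃ := frechetRho_comm_s12 q (y + t (φ k) • c) (z (φ k))
    have h₄ := hz (φ k)
    simp only [Function.comp_apply]
    linarith
  obtain ⟨k, hk⟩ := (hlim.eventually (gt_mem_nhds hδ)).exists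
  exact hzV (φ k) (hδV _ hk)

end FrechetSpaces

/-- An ordering principle of Brezis–Browder type. -/
theorem exists_mem_eq_of_forall_chain {S : Type*} (r : S → S → Prop) [Std.Refl r] [IsTrans S r]
    (τ : S → ℝ) (G : Set S) (T : ℝ) (hG : G.Nonempty) (hτ : ∀ a b, r a b → τ a ≤ τ b)
    (hT : ∀ a ∈ G, τ a ≤ T)
    (hchain : ∀ σ : ℕ → S, (∀ k, σ k ∈ G) → (∀ k, r (σ k) (σ (k + 1))) →
      ∃ b ∈ G, ∀ k, r (σ k) b)
    (hsucc : ∀ a ∈ G, τ a < T → ∃ b ∈ G, r a b ∧ τ a < τ b) :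
    ∃ a ∈ G, τ a = T := by
  by_contra! hne
  have hgreedy : ∀ (k : ℕ) (a : S), a ∈ G → ∃ b ∈ G, r a b ∧
      ∀ b' ∈ G, r a b' → τ b' < τ b + 1 / (k + 1) := by
    intro k a ha
    set A := τ '' {b | b ∈ G ∧ r a b}
    have hA : A.Nonempty := ⟨τ a, a, ⟨ha, refl a⟩, rfl⟩
    have hAbdd : BddAbove A := ⟨T, by rintro _ ⟨b, hb, rfl⟩; exact hT b hb.1⟩
    obtain ⟨_, ⟨b, hb, rfl⟩, hlt⟩ :=
      exists_lt_of_lt_csSup hA (sub_lt_self (sSup A) (Nat.one_div_pos_of_nat (n := k)))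
    refine ⟨b, hb.1, hb.2, fun b' hb' hab' => ?_⟩
    have := le_csSup hAbdd ⟨b', ⟨hb', hab'⟩, rfl⟩
    linarith
  choose! next hnextG hnext hnextmax using hgreedy
  obtain ⟨a₀, ha₀⟩ := hG
  let σ : ℕ → S := fun k => Nat.rec a₀ (fun k a => next k a) k
  have hσG : ∀ k, σ k ∈ G := fun k => Nat.rec ha₀ (fun k hk => hnextG k _ hk) k
  obtain ⟨b, hbG, hb⟩ := hchain σ hσG fun k => hnext k _ (hσG k)
  obtain ⟨b', hb'G, hbb', hlt⟩ := hsucc b hbG ((hT b hbG).lt_of_ne (hne b hbG))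
  obtain ⟨k, hk⟩ := exists_nat_one_div_lt (sub_pos.2 hlt)
  have h₁ := hnextmax k _ (hσG k) b' hb'G (_root_.trans (hb k) hbb')
  have h₂ := hτ _ _ (hb (k + 1))
  change τ b' < τ (σ (k + 1)) + 1 / (k + 1) at h₁
  linarith

theorem exists_of_mem_contVar {X Y : Type*} [AddCommGroup X] [Module ℝ X] [AddCommGroup Y]
    [Module ℝ Y] {q : ℕ → Seminorm ℝ Y} {F : X → Set Y} {x : X} {y c : Y} {A : Set X}
    (hc : c ∈ contVar q F x y A) {η T : ℝ} (hη : 0 < η) (hT : 0 < T) :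
    ∃ t ∈ Ioc 0 T, ∃ a ∈ A, ∃ z ∈ F (x + t • a), frechetRho q z (y + t • c) ≤ η * t := by
  obtain ⟨t, a, z, htpos, ht, ha, hz, herr⟩ := hc
  obtain ⟨k, htk, hk⟩ :=
    ((ht.eventually (gt_mem_nhds hT)).and (herr.eventually (gt_mem_nhds hη))).exists
  exact ⟨t k, ⟨htpos k, htk.le⟩, a k, ha k, z k, hz k, ((div_lt_iff₀ (htpos k)).1 hk).le⟩

structure Stage (X Y : Type*) where
  time : ℝ
  disp : X
  pt : Y

namespace Stage

variable {X Y : Type*} [AddCommGroup X] [Module ℝ X] [AddCommGroup Y] [Module ℝ Y]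
  (p : ℕ → Seminorm ℝ X) (q : ℕ → Seminorm ℝ Y) (s : ℕ → ℝ) (c : Y) (ε : ℝ)

/-- `σ'` continues `σ`: in the elapsed time `Δ`, the displacement grew by an element of
`Δ • Πₛ(X)` and the point moved by `Δ • c` up to an error `ε * Δ`. -/
def Precedes (σ σ' : Stage X Y) : Prop :=
  σ.time ≤ σ'.time ∧ (∀ n, p n (σ'.disp - σ.disp) ≤ (σ'.time - σ.time) * s n) ∧
    frechetRho q σ'.pt (σ.pt + (σ'.time - σ.time) • c) ≤ ε * (σ'.time - σ.time)

def ConvergesTo (σ : ℕ → Stage X Y) (σ₀ : Stage X Y) : Prop :=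
  Tendsto (fun k => (σ k).time) atTop (𝓝 σ₀.time) ∧
    Tendsto (fun k => frechetRho p (σ k).disp σ₀.disp) atTop (𝓝 0) ∧
    Tendsto (fun k => frechetRho q (σ k).pt σ₀.pt) atTop (𝓝 0)

variable {p q s c ε}

theorem Precedes.refl (σ : Stage X Y) : Precedes p q s c ε σ σ :=
  ⟨le_rfl, fun n => by simp, by simp [frechetRho_self_s12]⟩

theorem Precedes.trans {σ₁ σ₂ σ₃ : Stage X Y} (h₁₂ : Precedes p q s c ε σ₁ σ₂)
    (h₂₃ : Precedes p q s c ε σ₂ σ₃) : Precedes p q s c ε σ₁ σ₃ := by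
  obtain ⟨ht₁, hu₁, hw₁⟩ := h₁₂
  obtain ⟨ht₂, hu₂, hw₂⟩ := h₂₃
  refine ⟨ht₁.trans ht₂, fun n => ?_, ?_⟩
  · calc p n (σ₃.disp - σ₁.disp)
        ≤ p n (σ₃.disp - σ₂.disp) + p n (σ₂.disp - σ₁.disp) := by
          simpa using map_add_le_add (p n) (σ₃.disp - σ₂.disp) (σ₂.disp - σ₁.disp)
      _ ≤ (σ₃.time - σ₂.time) * s n + (σ₂.time - σ₁.time) * s n := add_le_add (hu₂ n) (hu₁ n)
      _ = (σ₃.time - σ₁.time) * s n := by ring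
  · calc frechetRho q σ₃.pt (σ₁.pt + (σ₃.time - σ₁.time) • c)
        ≤ frechetRho q σ₃.pt (σ₂.pt + (σ₃.time - σ₂.time) • c) +
            frechetRho q (σ₂.pt + (σ₃.time - σ₂.time) • c) (σ₁.pt + (σ₃.time - σ₁.time) • c) :=
          frechetRho_triangle_s12 q _ _ _
      _ = frechetRho q σ₃.pt (σ₂.pt + (σ₃.time - σ₂.time) • c) +
            frechetRho q σ₂.pt (σ₁.pt + (σ₂.time - σ₁.time) • c) := by
          congr 1
          exact frechetRho_eq_of_sub_eq q (by module)
      _ ≤ ε * (σ₃.time - σ₂.time) + ε * (σ₂.time - σ₁.time) := add_le_add hw₂ hw₁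
      _ = ε * (σ₃.time - σ₁.time) := by ring

instance : Std.Refl (Precedes p q s c ε) := ⟨Precedes.refl⟩

instance : IsTrans (Stage X Y) (Precedes p q s c ε) := ⟨fun _ _ _ => Precedes.trans⟩

theorem seminorm_disp_sub_le_abs {σ σ' : Stage X Y}
    (h : Precedes p q s c ε σ σ' ∨ Precedes p q s c ε σ' σ) (n : ℕ) :
    p n (σ'.disp - σ.disp) ≤ |σ'.time - σ.time| * s n := by
  rcases h with h | h
  · rw [abs_of_nonneg (sub_nonneg.2 h.1)]
    exact h.2.1 n
  · rw [map_sub_rev, abs_sub_comm, abs_of_nonneg (sub_nonneg.2 h.1)]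
    exact h.2.1 n

theorem frechetRho_pt_le_abs {σ σ' : Stage X Y}
    (h : Precedes p q s c ε σ σ' ∨ Precedes p q s c ε σ' σ) :
    frechetRho q σ'.pt (σ.pt + (σ'.time - σ.time) • c) ≤ ε * |σ'.time - σ.time| := by
  rcases h with h | h
  · rw [abs_of_nonneg (sub_nonneg.2 h.1)]
    exact h.2.2
  · rw [abs_sub_comm, abs_of_nonneg (sub_nonneg.2 h.1), frechetRho_comm_s12,
      frechetRho_eq_of_sub_eq q (b' := σ'.pt + (σ.time - σ'.time) • c) (by module)]
    exact h.2.2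

theorem Precedes.of_convergesTo {σ₀ σ₁ : Stage X Y} {σ : ℕ → Stage X Y}
    (h : ∀ᶠ k in atTop, Precedes p q s c ε σ₀ (σ k)) (hσ : ConvergesTo p q σ σ₁) :
    Precedes p q s c ε σ₀ σ₁ := by
  obtain ⟨ht, hu, hw⟩ := hσ
  refine ⟨ge_of_tendsto ht (h.mono fun k hk => hk.1), fun n => ?_, ?_⟩
  · exact seminorm_le_of_tendsto p n (a := fun k => (σ k).disp - σ₀.disp)
      (hu.congr fun k => frechetRho_eq_of_sub_eq p (sub_sub_sub_cancel_right _ _ _).symm)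
      ((ht.sub_const _).mul_const _) (h.mono fun k hk => hk.2.1 n)
  · exact frechetRho_le_of_tendsto q hw (tendsto_frechetRho_add_smul_s12 q _ c (ht.sub_const _))
      ((ht.sub_const _).const_mul ε) (h.mono fun k hk => hk.2.2)

theorem exists_convergesTo_of_chain (hX : RhoComplete p) (hY : RhoComplete q)
    {σ : ℕ → Stage X Y} (hσ : ∀ k, Precedes p q s c ε (σ k) (σ (k + 1)))
    (hbdd : BddAbove (range fun k => (σ k).time)) :
    ∃ σ₁, ConvergesTo p q σ σ₁ ∧ ∀ k, Precedes p q s c ε (σ k) σ₁ := by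
  have hle : ∀ k m, k ≤ m → Precedes p q s c ε (σ k) (σ m) :=
    fun _ _ hkm => Nat.rel_of_forall_rel_succ_of_le _ hσ hkm
  have hcomp : ∀ mk : ℕ × ℕ, Precedes p q s c ε (σ mk.2) (σ mk.1) ∨
      Precedes p q s c ε (σ mk.1) (σ mk.2) :=
    fun mk => (le_total mk.2 mk.1).imp (hle _ _) (hle _ _)
  obtain ⟨T, hT⟩ : ∃ T, Tendsto (fun k => (σ k).time) atTop (𝓝 T) :=
    ⟨_, tendsto_atTop_ciSup (monotone_nat_of_le_succ fun k => (hσ k).1) hbdd⟩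
  have hΔ : Tendsto (fun mk : ℕ × ℕ => |(σ mk.1).time - (σ mk.2).time|) atTop (𝓝 0) := by
    simpa only [Real.dist_eq] using cauchySeq_iff_tendsto_dist_atTop_0.1 hT.cauchySeq
  obtain ⟨u, hu⟩ := hX.exists_tendsto (u := fun k => (σ k).disp) fun n =>
    squeeze_zero (fun _ => apply_nonneg _ _) (fun mk => seminorm_disp_sub_le_abs (hcomp mk) n)
      (by simpa using hΔ.mul_const (s n))
  obtain ⟨w, hw⟩ := hY.exists_tendsto (u := fun k => (σ k).pt) fun n => by
    have hdrift := (tendsto_frechetRho_iff q).1 (squeeze_zero (fun _ => frechetRho_nonneg_s12 q _ _)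
      (fun mk => frechetRho_pt_le_abs (hcomp mk)) (by simpa using hΔ.const_mul ε)) n
    refine squeeze_zero (fun _ => apply_nonneg _ _) (fun mk => ?_)
      (by simpa using hdrift.add (hΔ.mul_const (q n c)))
    calc q n ((σ mk.1).pt - (σ mk.2).pt)
        ≤ q n ((σ mk.1).pt - ((σ mk.2).pt + ((σ mk.1).time - (σ mk.2).time) • c)) +
            q n (((σ mk.1).time - (σ mk.2).time) • c) := by
          refine le_of_eq_of_le ?_ (map_add_le_add (q n) _ _)
          congr 1
          abel
      _ = _ := by rw [map_smul_eq_mul, Real.norm_eq_abs]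
  have hconv : ConvergesTo p q σ ⟨T, u, w⟩ := ⟨hT, hu, hw⟩
  exact ⟨_, hconv, fun k => .of_convergesTo ((eventually_ge_atTop k).mono (hle k)) hconv⟩

end Stage

namespace Stage

variable {X Y : Type*} [AddCommGroup X] [Module ℝ X] [AddCommGroup Y] [Module ℝ Y]
  (p : ℕ → Seminorm ℝ X) (q : ℕ → Seminorm ℝ Y) (s : ℕ → ℝ) (c : Y) (ε : ℝ)
  (F : X → Set Y) (x : X) (y : Y)

def Reachable (σ : Stage X Y) : Prop :=
  Precedes p q s c ε ⟨0, 0, y⟩ σ ∧ σ.time ≤ 1 ∧ σ.pt ∈ F (x + σ.disp)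

variable {p q s c ε F x y}

theorem Reachable.time_nonneg {σ : Stage X Y} (h : Reachable p q s c ε F x y σ) :
    0 ≤ σ.time :=
  h.1.1

theorem Reachable.disp_mem_PiS (hs : ∀ n, 0 ≤ s n) {σ : Stage X Y}
    (h : Reachable p q s c ε F x y σ) : σ.disp ∈ PiS p s := fun n => by
  simpa using (h.1.2.1 n).trans (mul_le_of_le_one_left (hs n) (by simpa using h.2.1))

theorem Reachable.frechetRho_pt_le {σ : Stage X Y} (h : Reachable p q s c ε F x y σ) :
    frechetRho q σ.pt (y + σ.time • c) ≤ ε * σ.time := by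
  simpa using h.1.2.2

theorem Reachable.exists_succ (hε : 0 < ε) {σ : Stage X Y} (h : Reachable p q s c ε F x y σ)
    (hc : c ∈ contVar q F (x + σ.disp) σ.pt (PiS p s)) (h1 : σ.time < 1) :
    ∃ σ', Reachable p q s c ε F x y σ' ∧ Precedes p q s c ε σ σ' ∧ σ.time < σ'.time := by
  obtain ⟨t, ⟨ht, ht1⟩, a, ha, z, hz, hzc⟩ := exists_of_mem_contVar hc hε (sub_pos.2 h1)
  have hstep : Precedes p q s c ε σ ⟨σ.time + t, σ.disp + t • a, z⟩ := by
    refine ⟨by simp [ht.le], fun n => ?_, by simpa using hzc⟩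
    simpa [map_smul_eq_mul, abs_of_pos ht] using mul_le_mul_of_nonneg_left (ha n) ht.le
  refine ⟨_, ⟨h.1.trans hstep, ?_, ?_⟩, hstep, ?_⟩
  · change σ.time + t ≤ 1
    linarith
  · simpa [add_assoc] using hz
  · change σ.time < σ.time + t
    linarith

theorem Reachable.exists_upperBound (hX : RhoComplete p) (hY : RhoComplete q)
    (hF : RhoClosedGraph p q F) {σ : ℕ → Stage X Y} (h : ∀ k, Reachable p q s c ε F x y (σ k))
    (hσ : ∀ k, Precedes p q s c ε (σ k) (σ (k + 1))) :
    ∃ σ₁, Reachable p q s c ε F x y σ₁ ∧ ∀ k, Precedes p q s c ε (σ k) σ₁ := by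
  obtain ⟨σ₁, ⟨ht, hu, hw⟩, hσ₁⟩ :=
    exists_convergesTo_of_chain hX hY hσ ⟨1, by rintro _ ⟨k, rfl⟩; exact (h k).2.1⟩
  refine ⟨σ₁, ⟨(h 0).1.trans (hσ₁ 0), le_of_tendsto' ht fun k => (h k).2.1,
    hF _ _ _ _ (fun k => (h k).2.2) ?_ hw⟩, hσ₁⟩
  exact hu.congr fun k => frechetRho_eq_of_sub_eq p (add_sub_add_left_eq_sub _ _ x).symm

end Stage

open Stage in
theorem add_mem_rhoClosure_of_mem_contVar {X Y : Type*} [AddCommGroup X] [Module ℝ X]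
    [AddCommGroup Y] [Module ℝ Y] {p : ℕ → Seminorm ℝ X} {q : ℕ → Seminorm ℝ Y}
    (hX : RhoComplete p) (hY : RhoComplete q) {F : X → Set Y} (hF : RhoClosedGraph p q F)
    {U : Set X} {V : Set Y} (hV : RhoOpen q V) {s : ℕ → ℝ} (hs : ∀ n, 0 ≤ s n) {c : Y}
    (hD : ∀ x y, y ∈ F x → x ∈ U → y ∈ V → c ∈ contVar q F x y (PiS p s))
    {x : X} {y : Y} (hxy : y ∈ F x) (hxU : ∀ u ∈ PiS p s, x + u ∈ U)
    (hyV : ∀ t ∈ Icc (0 : ℝ) 1, y + t • c ∈ V) :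
    y + c ∈ rhoClosure q (⋃ u ∈ PiS p s, F (x + u)) := by
  obtain ⟨ε₀, hε₀, hV₀⟩ := hV.exists_forall_segment hyV
  intro ε hε
  set ε' := min ε₀ (ε / 2)
  have hε' : 0 < ε' := lt_min hε₀ (half_pos hε)
  obtain ⟨σ, hσ, h1⟩ := exists_mem_eq_of_forall_chain (Precedes p q s c ε') time
    {σ | Reachable p q s c ε' F x y σ} 1
    ⟨⟨0, 0, y⟩, .refl _, zero_le_one, by simpa using hxy⟩ (fun _ _ h => h.1) (fun _ h => h.2.1)
    (fun _ h hσ => Reachable.exists_upperBound hX hY hF h hσ) fun σ h h1 => by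
      refine h.exists_succ hε' (hD _ _ h.2.2 (hxU _ (h.disp_mem_PiS hs))
        (hV₀ _ ⟨h.time_nonneg, h.2.1⟩ _ (h.frechetRho_pt_le.trans ?_))) h1
      calc ε' * σ.time ≤ ε' * 1 := mul_le_mul_of_nonneg_left h.2.1 hε'.le
        _ ≤ ε₀ := by simp [ε']
  refine ⟨σ.pt, mem_biUnion (hσ.disp_mem_PiS hs) hσ.2.2, ?_⟩
  have := hσ.frechetRho_pt_le
  rw [h1, one_smul, mul_one] at this
  exact this.trans_lt ((min_le_right _ _).trans_lt (half_lt_self hε))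

theorem stmt12_general {X Y : Type*} [AddCommGroup X] [Module ℝ X] [AddCommGroup Y] [Module ℝ Y]
    (p : ℕ → Seminorm ℝ X) (q : ℕ → Seminorm ℝ Y)
    (hcompX : ∀ u : ℕ → X,
      (∀ ε > (0 : ℝ), ∃ N, ∀ m ≥ N, ∀ k ≥ N, frechetRho p (u m) (u k) < ε) →
      ∃ x : X, Tendsto (fun k => frechetRho p (u k) x) atTop (𝓝 0))
    (hcompY : ∀ u : ℕ → Y,
      (∀ ε > (0 : ℝ), ∃ N, ∀ m ≥ N, ∀ k ≥ N, frechetRho q (u m) (u k) < ε) →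
      ∃ y : Y, Tendsto (fun k => frechetRho q (u k) y) atTop (𝓝 0))
    (F : X → Set Y)
    (hgraph : ∀ (u : ℕ → X) (w : ℕ → Y) (x : X) (y : Y), (∀ k, w k ∈ F (u k)) →
      Tendsto (fun k => frechetRho p (u k) x) atTop (𝓝 0) →
      Tendsto (fun k => frechetRho q (w k) y) atTop (𝓝 0) → y ∈ F x)
    (U : Set X) (V : Set Y) (hV : RhoOpen q V)
    (s : ℕ → ℝ) (hs : ∀ n, 0 ≤ s n)
    (C : Set Y)
    (hD : ∀ x y, y ∈ F x → x ∈ U → y ∈ V → C ⊆ contVar q F x y (PiS p s))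
    -- `Πₛ(X)` is compact in the Fréchet metric:
    (hcpt : ∀ u : ℕ → X, (∀ k, u k ∈ PiS p s) →
      ∃ xb ∈ PiS p s, ∃ φ : ℕ → ℕ, StrictMono φ ∧
        Tendsto (fun k => frechetRho p (u (φ k)) xb) atTop (𝓝 0)) :
    ∀ x y, y ∈ F x → (∀ u ∈ PiS p s, x + u ∈ U) →
      (∀ c ∈ C, ∀ t ∈ Set.Icc (0 : ℝ) 1, y + t • c ∈ V) →
      ∀ c ∈ C, y + c ∈ ⋃ u ∈ PiS p s, F (x + u) := by
  intro x y hxy hxU hyV c hc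
  have hclosure : y + c ∈ rhoClosure q (⋃ u ∈ PiS p s, F (x + u)) :=
    add_mem_rhoClosure_of_mem_contVar hcompX hcompY hgraph hV hs
      (fun x' y' hF hx' hy' => hD x' y' hF hx' hy' hc) hxy hxU (hyV c hc)
  exact RhoClosedGraph.rhoClosure_biUnion_subset (p := p) hgraph hcpt x hclosure

/-- under the hypotheses of the cornerstone theorem, if moreover `Πₛ(X)`
is compact (sequentially, in the Fréchet metric), then `F(x + Πₛ(X)) ⊇ y + C`
without closure. -/
theorem stmt12 {X Y : Type*} [AddCommGroup X] [Module ℝ X] [AddCommGroup Y] [Module ℝ Y]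
    (p : ℕ → Seminorm ℝ X) (q : ℕ → Seminorm ℝ Y)
    (hsepX : ∀ x : X, (∀ n, p n x = 0) → x = 0)
    (hsepY : ∀ y : Y, (∀ n, q n y = 0) → y = 0)
    (hcompX : ∀ u : ℕ → X,
      (∀ ε > (0 : ℝ), ∃ N, ∀ m ≥ N, ∀ k ≥ N, frechetRho p (u m) (u k) < ε) →
      ∃ x : X, Tendsto (fun k => frechetRho p (u k) x) atTop (𝓝 0))
    (hcompY : ∀ u : ℕ → Y,
      (∀ ε > (0 : ℝ), ∃ N, ∀ m ≥ N, ∀ k ≥ N, frechetRho q (u m) (u k) < ε) →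
      ∃ y : Y, Tendsto (fun k => frechetRho q (u k) y) atTop (𝓝 0))
    (F : X → Set Y)
    (hgraph : ∀ (u : ℕ → X) (w : ℕ → Y) (x : X) (y : Y), (∀ k, w k ∈ F (u k)) →
      Tendsto (fun k => frechetRho p (u k) x) atTop (𝓝 0) →
      Tendsto (fun k => frechetRho q (w k) y) atTop (𝓝 0) → y ∈ F x)
    (U : Set X) (V : Set Y) (hU : RhoOpen p U) (hV : RhoOpen q V)
    (hne : ∃ x y, y ∈ F x ∧ x ∈ U ∧ y ∈ V)
    (s : ℕ → ℝ) (hs : ∀ n, 0 ≤ s n)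
    (C : Set Y) (hC : C.Nonempty)
    (hD : ∀ x y, y ∈ F x → x ∈ U → y ∈ V → C ⊆ contVar q F x y (PiS p s))
    -- `Πₛ(X)` is compact in the Fréchet metric:
    (hcpt : ∀ u : ℕ → X, (∀ k, u k ∈ PiS p s) →
      ∃ xb ∈ PiS p s, ∃ φ : ℕ → ℕ, StrictMono φ ∧
        Tendsto (fun k => frechetRho p (u (φ k)) xb) atTop (𝓝 0)) :
    ∀ x y, y ∈ F x → (∀ u ∈ PiS p s, x + u ∈ U) →
      (∀ c ∈ C, ∀ t ∈ Set.Icc (0 : ℝ) 1, y + t • c ∈ V) →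
      ∀ c ∈ C, y + c ∈ ⋃ u ∈ PiS p s, F (x + u) :=
  stmt12_general p q hcompX hcompY F hgraph U V hV s hs C hD hcpt
end
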